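/- arXiv:1710.07777 — 8 statements merged into one kernel-verified Lean document; each statement's English description precedes it below -/
import Mathlib

section
/- Let a and b be real numbers with 0 < a < 1, b > 1, and ab ≥ 1. Then the Weierstrass sine function S(x) = ∑_{n=0}^∞ aⁿ sin(bⁿπx) has no finite derivative at any real point x; that is, for every x ∈ ℝ there is no real number L such that S is differentiable at x with derivative L. -/
/-!
Test `S` against a Schwartz function `g` whose Fourier transform equals `1` at `1/2` and is
supported in `(1/(2b), b/2)`. At the scale `b⁻ᵐ` only the `m`-th term of the series survives:
`∫ S(x + b⁻ᵐ u) g(u) du = aᵐ e^{-iπbᵐx} i/2`. Since `𝓕 g` vanishes near `0`, `g` annihilates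
affine functions, so a derivative of `S` at `x` would make this integral `o(b⁻ᵐ)`; but `bᵐ` times
it has modulus `(ab)ᵐ/2 ≥ 1/2`.
-/

open Real Filter MeasureTheory FourierTransform Complex Topology Set
open scoped ContDiff

theorem exists_schwartz_fourier_eq_one_of_support_subset {p q ξ₀ : ℝ} (hξ₀ : ξ₀ ∈ Ioo p q) :
    ∃ g : SchwartzMap ℝ ℂ, 𝓕 (g : ℝ → ℂ) ξ₀ = 1 ∧
      Function.support (𝓕 (g : ℝ → ℂ)) ⊆ Ioo p q := by
  set r := min (ξ₀ - p) (q - ξ₀)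
  have hr : 0 < r := lt_min (sub_pos.2 hξ₀.1) (sub_pos.2 hξ₀.2)
  let bump : ContDiffBump ξ₀ := ⟨r / 2, r, half_pos hr, half_lt_self hr⟩
  let φ : ℝ → ℂ := fun ξ => (bump ξ : ℂ)
  have hφ : HasCompactSupport φ := bump.hasCompactSupport.comp_left ofReal_zero
  have hφ' : ContDiff ℝ ∞ φ := ofRealCLM.contDiff.comp bump.contDiff
  refine ⟨𝓕⁻ (hφ.toSchwartzMap hφ'), ?_⟩
  have hFg : 𝓕 ((𝓕⁻ (hφ.toSchwartzMap hφ') : SchwartzMap ℝ ℂ) : ℝ → ℂ) = φ := by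
    rw [← SchwartzMap.fourier_coe, fourier_fourierInv_eq]; rfl
  rw [hFg]
  refine ⟨by simp [φ, bump.one_of_mem_closedBall (Metric.mem_closedBall_self bump.rIn_pos.le)],
    fun ξ hξ => ?_⟩
  have hξ : ξ ∈ Metric.ball ξ₀ r := by
    rw [← bump.support_eq]; simpa [φ] using hξ
  rw [Metric.mem_ball, Real.dist_eq, abs_lt] at hξ
  constructor <;> linarith [min_le_left (ξ₀ - p) (q - ξ₀), min_le_right (ξ₀ - p) (q - ξ₀)]

theorem SchwartzMap.integrable_ofReal_mul (g : SchwartzMap ℝ ℂ) :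
    Integrable fun u : ℝ => (u : ℂ) * g u :=
  (g.integrable_pow_mul volume 1).mono' (by fun_prop) (.of_forall fun u => by simp)

theorem integral_eq_zero_of_fourier_eventuallyEq_zero {g : ℝ → ℂ} (h : 𝓕 g =ᶠ[𝓝 0] 0) :
    ∫ u, g u = 0 := by
  simpa [Real.fourier_real_eq] using h.self_of_nhds

theorem integral_mul_eq_zero_of_fourier_eventuallyEq_zero {g : ℝ → ℂ} (hg : Integrable g)
    (hug : Integrable fun u : ℝ => (u : ℂ) * g u) (h : 𝓕 g =ᶠ[𝓝 0] 0) :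
    ∫ u : ℝ, (u : ℂ) * g u = 0 := by
  have hug' : Integrable fun u : ℝ => u • g u := by simpa only [real_smul] using hug
  have hderiv := (Real.hasDerivAt_fourier hg hug' 0).unique
    ((hasDerivAt_const (0 : ℝ) (0 : ℂ)).congr_of_eventuallyEq h)
  have hconst : (-2 * π * I : ℂ) ≠ 0 := by simp [Real.pi_ne_zero, I_ne_zero]
  have hmul : (fun u : ℝ => (-2 * π * I * u) • g u) =
      fun u : ℝ => (-2 * π * I) * ((u : ℂ) * g u) := by
    ext u; simp only [smul_eq_mul]; ring
  rw [hmul, Real.fourier_real_eq] at hderiv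
  simp only [mul_zero, neg_zero, AddChar.map_zero_eq_one, one_smul] at hderiv
  rw [integral_const_mul, mul_eq_zero] at hderiv
  exact hderiv.resolve_left hconst

theorem integral_exp_mul_I_mul_eq_fourier (g : ℝ → ℂ) (w : ℝ) :
    ∫ u, exp ((w * u : ℝ) * I) * g u = 𝓕 g (-w / (2 * π)) := by
  rw [Real.fourier_real_eq_integral_exp_smul]
  congr 1 with u
  rw [smul_eq_mul]
  congr 3
  field_simp [Real.pi_ne_zero]

theorem integral_sin_add_mul_mul (g : ℝ → ℂ) (hg : Integrable g) (c w : ℝ) :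
    ∫ u, (Real.sin (c + w * u) : ℂ) * g u =
      (exp (-c * I) * 𝓕 g (w / (2 * π)) - exp (c * I) * 𝓕 g (-w / (2 * π))) * I / 2 := by
  have hint : ∀ w : ℝ, Integrable fun u => exp ((w * u : ℝ) * I) * g u := fun w =>
    hg.bdd_mul (c := 1) (by fun_prop) (.of_forall fun u => by rw [norm_exp_ofReal_mul_I])
  have hsplit : ∀ u : ℝ, (Real.sin (c + w * u) : ℂ) * g u =
      (exp (-c * I) * (exp ((-w * u : ℝ) * I) * g u) -
        exp (c * I) * (exp ((w * u : ℝ) * I) * g u)) * (I / 2) := by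
    intro u
    rw [ofReal_sin, Complex.sin]
    have hexp : ∀ s t : ℝ, cexp (↑(s + t) * I) = cexp (↑s * I) * cexp (↑t * I) := fun s t => by
      rw [← Complex.exp_add]; push_cast; ring_nf
    rw [show -(↑(c + w * u) : ℂ) * I = ↑(-c + -w * u) * I by push_cast; ring, hexp, hexp]
    push_cast
    ring
  simp_rw [hsplit]
  rw [integral_mul_const, integral_sub ((hint _).const_mul _) ((hint _).const_mul _),
    integral_const_mul, integral_const_mul, integral_exp_mul_I_mul_eq_fourier,
    integral_exp_mul_I_mul_eq_fourier, neg_neg]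
  ring

theorem HasDerivAt.exists_abs_sub_le_mul_abs_sub {f : ℝ → ℝ} {x L M : ℝ}
    (hM : ∀ y, |f y| ≤ M) (hL : HasDerivAt f L x) :
    ∃ C, ∀ y, |f y - f x| ≤ C * |y - x| := by
  obtain ⟨K, hK⟩ := hL.isBigO_sub.bound
  obtain ⟨δ, hδ, hball⟩ := Metric.eventually_nhds_iff.1 hK
  refine ⟨max K (2 * M / δ), fun y => ?_⟩
  by_cases hy : dist y x < δ
  · have hle : |f y - f x| ≤ K * |y - x| := by simpa using hball hy
    exact hle.trans (by gcongr; exact le_max_left _ _)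
  · rw [not_lt, Real.dist_eq] at hy
    have hM0 : 0 ≤ M := (abs_nonneg _).trans (hM x)
    calc |f y - f x| ≤ 2 * M := by
          linarith [abs_sub (f y) (f x), hM x, hM y]
      _ = 2 * M / δ * δ := by field_simp
      _ ≤ max K (2 * M / δ) * |y - x| := by gcongr; exact le_max_right _ _

/-- As `g` annihilates affine functions, only the remainder `f (x + s u) - f x - s u L` of the
first-order Taylor expansion contributes, and it is `o(s)`, dominated by `C |s u|`. -/
theorem tendsto_inv_smul_integral_comp_add_mul_of_hasDerivAt {f : ℝ → ℝ} {x L M : ℝ}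
    (hf : Measurable f) (hM : ∀ y, |f y| ≤ M) (hL : HasDerivAt f L x) {g : ℝ → ℂ}
    (hg : Integrable g) (hug : Integrable fun u : ℝ => (u : ℂ) * g u)
    (hg0 : ∫ u, g u = 0) (hug0 : ∫ u : ℝ, (u : ℂ) * g u = 0) :
    Tendsto (fun s : ℝ => s⁻¹ • ∫ u, (f (x + s * u) : ℂ) * g u) (𝓝[>] 0) (𝓝 0) := by
  obtain ⟨C, hC⟩ := hL.exists_abs_sub_le_mul_abs_sub hM
  let F : ℝ → ℝ → ℂ := fun s u => ((s⁻¹ * (f (x + s * u) - f x) - u * L : ℝ) : ℂ) * g u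
  have hfm : ∀ s, Measurable fun u => (f (x + s * u) : ℂ) := fun s => by fun_prop
  have hfg : ∀ s, Integrable fun u => (f (x + s * u) : ℂ) * g u := fun s =>
    hg.bdd_mul (c := M) (hfm s).aestronglyMeasurable (.of_forall fun u => by simpa using hM _)
  have hF : ∀ s, ∫ u, F s u = s⁻¹ • ∫ u, (f (x + s * u) : ℂ) * g u := by
    intro s
    have hsplit : ∀ u, F s u = (s⁻¹ : ℂ) * ((f (x + s * u) : ℂ) * g u)
        - (s⁻¹ * f x : ℂ) * g u - (L : ℂ) * ((u : ℂ) * g u) := fun u => by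
      simp only [F]; push_cast; ring
    simp_rw [hsplit]
    rw [integral_sub, integral_sub, integral_const_mul, integral_const_mul, integral_const_mul,
      hg0, hug0, real_smul]
    · push_cast; ring
    exacts [(hfg s).const_mul _, hg.const_mul _, ((hfg s).const_mul _).sub (hg.const_mul _),
      hug.const_mul _]
  have hlim : Tendsto (fun s => ∫ u, F s u) (𝓝[>] 0) (𝓝 (∫ _ : ℝ, (0 : ℂ))) := by
    refine tendsto_integral_filter_of_dominated_convergence (fun u => (C + |L|) * ‖(u : ℂ) * g u‖)
      (.of_forall fun s => ((by fun_prop : Measurable fun u =>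
        ((s⁻¹ * (f (x + s * u) - f x) - u * L : ℝ) : ℂ)).aestronglyMeasurable.mul
        hg.aestronglyMeasurable)) ?_ (hug.norm.const_mul _) (.of_forall fun u => ?_)
    · filter_upwards [self_mem_nhdsWithin] with s (hs : 0 < s)
      refine .of_forall fun u => ?_
      rw [norm_mul, norm_mul, Complex.norm_real, Real.norm_eq_abs, Complex.norm_real,
        Real.norm_eq_abs, ← mul_assoc]
      gcongr
      calc |s⁻¹ * (f (x + s * u) - f x) - u * L|
          ≤ s⁻¹ * |f (x + s * u) - f x| + |u| * |L| := by
            refine (abs_sub _ _).trans (le_of_eq ?_)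
            rw [abs_mul, abs_mul, abs_of_pos (inv_pos.2 hs)]
        _ ≤ s⁻¹ * (C * |s * u|) + |u| * |L| := by
            gcongr; simpa using hC (x + s * u)
        _ = (C + |L|) * |u| := by
            rw [abs_mul, abs_of_pos hs]; field_simp
    · have hd : HasDerivAt (fun s => f (x + s * u)) (L * u) 0 := by
        refine HasDerivAt.comp (0 : ℝ) (by simpa using hL) ?_
        simpa using ((hasDerivAt_id (0 : ℝ)).mul_const u).const_add x
      have := (hd.tendsto_slope_zero_right.sub_const (u * L)).ofReal.mul_const (g u)
      simpa [F, mul_comm L u] using this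
  simpa [hF] using hlim

theorem pow_div_pow_notMem_Ioo {K : Type*} [Field K] [LinearOrder K] [IsStrictOrderedRing K]
    {b : K} (hb : 1 < b) {m n : ℕ} (hmn : n ≠ m) :
    b ^ n / b ^ m ∉ Ioo b⁻¹ b := by
  rintro ⟨hlo, hhi⟩
  have hb0 : 0 < b := one_pos.trans hb
  rw [← zpow_natCast, ← zpow_natCast, ← zpow_sub₀ hb0.ne'] at hlo hhi
  rw [← zpow_neg_one] at hlo
  nth_rw 2 [← zpow_one b] at hhi
  rw [zpow_lt_zpow_iff_right₀ hb] at hlo hhi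
  omega

noncomputable def weierstrassSin (a b x : ℝ) : ℝ := ∑' n : ℕ, a ^ n * Real.sin (b ^ n * π * x)

section weierstrassSin

variable {a : ℝ} (b : ℝ)

theorem abs_weierstrassSin_term_le (n : ℕ) (x : ℝ) :
    |a ^ n * Real.sin (b ^ n * π * x)| ≤ |a| ^ n := by
  rw [abs_mul, abs_pow]
  exact mul_le_of_le_one_right (by positivity) (abs_sin_le_one _)

variable (ha : |a| < 1)
include ha

theorem summable_weierstrassSin_term (x : ℝ) :
    Summable fun n : ℕ => a ^ n * Real.sin (b ^ n * π * x) :=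
  .of_norm_bounded (summable_geometric_of_lt_one (abs_nonneg a) ha)
    (abs_weierstrassSin_term_le b · x)

theorem continuous_weierstrassSin : Continuous (weierstrassSin a b) :=
  continuous_tsum (fun n => by fun_prop) (summable_geometric_of_lt_one (abs_nonneg a) ha)
    (abs_weierstrassSin_term_le b)

theorem abs_weierstrassSin_le (x : ℝ) : |weierstrassSin a b x| ≤ (1 - |a|)⁻¹ := by
  rw [← tsum_geometric_of_lt_one (abs_nonneg a) ha]
  exact (norm_tsum_le_tsum_norm (summable_weierstrassSin_term b ha x).norm).trans
    ((summable_weierstrassSin_term b ha x).norm.tsum_le_tsum (abs_weierstrassSin_term_le b · x)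
      (summable_geometric_of_lt_one (abs_nonneg a) ha))

theorem integral_weierstrassSin_comp_add_mul_mul {g : ℝ → ℂ} (hg : Integrable g) (x s : ℝ) :
    ∫ u, (weierstrassSin a b (x + s * u) : ℂ) * g u =
      ∑' n : ℕ, (a ^ n : ℂ) * (exp (-(b ^ n * π * x : ℝ) * I) * 𝓕 g (b ^ n * s / 2) -
        exp ((b ^ n * π * x : ℝ) * I) * 𝓕 g (-(b ^ n * s) / 2)) * I / 2 := by
  let F : ℕ → ℝ → ℂ := fun n u => ((a ^ n * Real.sin (b ^ n * π * (x + s * u)) : ℝ) : ℂ) * g u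
  have hF_le : ∀ n u, ‖F n u‖ ≤ |a| ^ n * ‖g u‖ := fun n u => by
    rw [norm_mul, Complex.norm_real]; gcongr; exact abs_weierstrassSin_term_le b n _
  have hF_int : ∀ n, Integrable (F n) := fun n =>
    (hg.norm.const_mul _).mono' (by fun_prop) (.of_forall (hF_le n))
  have hF_sum : Summable fun n => ∫ u, ‖F n u‖ :=
    .of_nonneg_of_le (fun n => integral_nonneg fun u => norm_nonneg _)
      (fun n => (integral_mono (hF_int n).norm (hg.norm.const_mul _) (hF_le n)).trans_eq
        (integral_const_mul _ _))
      ((summable_geometric_of_lt_one (abs_nonneg a) ha).mul_right _)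
  have hF_tsum : ∀ u, ∑' n, F n u = (weierstrassSin a b (x + s * u) : ℂ) * g u := fun u => by
    rw [tsum_mul_right, weierstrassSin, ofReal_tsum]
  simp_rw [← hF_tsum, ← integral_tsum_of_summable_integral_norm hF_int hF_sum]
  refine tsum_congr fun n => ?_
  have hsin : ∀ u,
      F n u = (a ^ n : ℂ) * ((Real.sin (b ^ n * π * x + b ^ n * π * s * u) : ℂ) * g u) :=
    fun u => by simp only [F]; push_cast; ring_nf
  simp_rw [hsin]
  rw [integral_const_mul, integral_sin_add_mul_mul g hg]
  field_simp [Real.pi_ne_zero]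

/-- The `n`-th term is seen through `𝓕 g` at the frequencies `± bⁿ⁻ᵐ / 2`, which lie in the
support of `𝓕 g` only for `n = m`. -/
theorem integral_weierstrassSin_comp_add_pow_inv_mul (hb : 1 < b) {g : ℝ → ℂ} (hg : Integrable g)
    (hg_half : 𝓕 g (1 / 2) = 1) (hg_supp : Function.support (𝓕 g) ⊆ Ioo (b⁻¹ / 2) (b / 2))
    (x : ℝ) (m : ℕ) :
    ∫ u, (weierstrassSin a b (x + (b ^ m)⁻¹ * u) : ℂ) * g u =
      (a ^ m : ℂ) * exp (-(b ^ m * π * x : ℝ) * I) * I / 2 := by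
  have hbm : 0 < b ^ m := pow_pos (one_pos.trans hb) m
  have hvanish : ∀ ξ, ξ ∉ Ioo (b⁻¹ / 2) (b / 2) → 𝓕 g ξ = 0 := fun ξ hξ =>
    Function.notMem_support.1 fun h => hξ (hg_supp h)
  have hnonpos : ∀ ξ ≤ 0, 𝓕 g ξ = 0 := fun ξ hξ =>
    hvanish ξ fun h => by linarith [h.1, inv_pos.2 (one_pos.trans hb)]
  rw [integral_weierstrassSin_comp_add_mul_mul b ha hg, tsum_eq_single m fun n hn => ?_]
  · rw [mul_inv_cancel₀ hbm.ne', hg_half, hnonpos _ (by norm_num)]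
    ring
  · have hpos : 𝓕 g (b ^ n * (b ^ m)⁻¹ / 2) = 0 := hvanish _ fun ⟨hlo, hhi⟩ =>
      pow_div_pow_notMem_Ioo hb hn ⟨by rw [div_eq_mul_inv]; linarith,
        by rw [div_eq_mul_inv]; linarith⟩
    rw [hpos, hnonpos _ (div_nonpos_of_nonpos_of_nonneg (neg_nonpos.2 (by positivity)) zero_le_two)]
    ring

theorem norm_integral_weierstrassSin_comp_add_pow_inv_mul (hb : 1 < b) {g : ℝ → ℂ}
    (hg : Integrable g) (hg_half : 𝓕 g (1 / 2) = 1)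
    (hg_supp : Function.support (𝓕 g) ⊆ Ioo (b⁻¹ / 2) (b / 2)) (x : ℝ) (m : ℕ) :
    ‖∫ u, (weierstrassSin a b (x + (b ^ m)⁻¹ * u) : ℂ) * g u‖ = |a| ^ m / 2 := by
  rw [integral_weierstrassSin_comp_add_pow_inv_mul b ha hb hg hg_half hg_supp, ← ofReal_neg]
  simp only [norm_div, norm_mul, norm_pow, Complex.norm_real, Real.norm_eq_abs,
    norm_exp_ofReal_mul_I, norm_I, Complex.norm_two, mul_one]

end weierstrassSin

/-- Hardy's theorem: for `0 < a < 1`, `b > 1` with `a * b ≥ 1`, the Weierstrass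
sine function `S(x) = ∑ aⁿ sin(bⁿ π x)` has no finite derivative at any point. -/
theorem weierstrass_sin_nowhere_differentiable
    (a b : ℝ) (ha0 : 0 < a) (ha1 : a < 1) (hb : 1 < b) (hab : 1 ≤ a * b) (x : ℝ) :
    ¬ ∃ L : ℝ,
      HasDerivAt (fun y : ℝ => ∑' n : ℕ, a ^ n * Real.sin (b ^ n * π * y)) L x := by
  rintro ⟨L, hL⟩
  have ha : |a| < 1 := abs_lt.2 ⟨by linarith, ha1⟩
  have hb0 : 0 < b := one_pos.trans hb
  obtain ⟨g, hg_half, hg_supp⟩ := exists_schwartz_fourier_eq_one_of_support_subset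
    (show (1 / 2 : ℝ) ∈ Ioo (b⁻¹ / 2) (b / 2) from
      ⟨by linarith [inv_lt_one_of_one_lt₀ hb], by linarith⟩)
  have hvanish : 𝓕 (g : ℝ → ℂ) =ᶠ[𝓝 0] 0 := by
    filter_upwards [Iio_mem_nhds (by positivity : (0 : ℝ) < b⁻¹ / 2)] with ξ hξ
    exact Function.notMem_support.1 fun h => (hg_supp h).1.not_gt hξ
  have hsmall := tendsto_inv_smul_integral_comp_add_mul_of_hasDerivAt
    (continuous_weierstrassSin b ha).measurable (abs_weierstrassSin_le b ha) hL g.integrable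
    g.integrable_ofReal_mul     (integral_eq_zero_of_fourier_eventuallyEq_zero hvanish)
    (integral_mul_eq_zero_of_fourier_eventuallyEq_zero g.integrable g.integrable_ofReal_mul hvanish)
  have hscale : Tendsto (fun m : ℕ => (b ^ m)⁻¹) atTop (𝓝[>] 0) :=
    tendsto_inv_atTop_nhdsGT_zero.comp (tendsto_pow_atTop_atTop_of_one_lt hb)
  have hlarge : ∀ m : ℕ,
      1 / 2 ≤ ‖(b ^ m)⁻¹⁻¹ • ∫ u, (weierstrassSin a b (x + (b ^ m)⁻¹ * u) : ℂ) * g u‖ := by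
    intro m
    rw [inv_inv, norm_smul, norm_integral_weierstrassSin_comp_add_pow_inv_mul b ha hb
      g.integrable hg_half hg_supp, norm_pow, Real.norm_of_nonneg hb0.le, abs_of_pos ha0,
      ← mul_div_assoc, ← mul_pow, mul_comm b a]
    linarith [one_le_pow₀ (n := m) hab]
  obtain ⟨m, hm⟩ :=
    ((hsmall.comp hscale).norm.eventually_lt_const (by simp : ‖(0 : ℂ)‖ < 1 / 2)).exists
  exact (hlarge m).not_gt hm
end

section
/- Let a and b be real numbers with 0 < a < 1, b > 1, and ab > 1, and set ξ = log(1/a)/log b, so 0 < ξ < 1. Then the function C(x) = ∑_{n=0}^∞ aⁿ cos(bⁿπx) satisfies C(x+h) − C(x) = O(|h|^ξ) as h → 0, uniformly in x; i.e. there exist constants K > 0 and δ > 0 such that |C(x+h) − C(x)| ≤ K|h|^ξ for all x ∈ ℝ and all h with 0 < |h| < δ. The same estimate holds for S(x) = ∑_{n=0}^∞ aⁿ sin(bⁿπx). -/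
open Real

open scoped NNReal

/-!
Split the series at the scale `N` with `b ^ N ≈ 1 / |h|`. Below it, the Lipschitz bound makes the
terms at most `L |h| (a b)ⁿ`, a geometric sum dominated by its last term `(a b)ᴺ |h|` since
`a b > 1`; from `N` on, the trivial bound `2 M aⁿ` leaves a geometric tail of size `aᴺ`.
As `a = b ^ (-ξ)`, both `(a b)ᴺ |h|` and `aᴺ` are `O(|h| ^ ξ)`.
-/

section LacunarySeries

variable {f : ℝ → ℝ} {M : ℝ} {L : ℝ≥0} {a b : ℝ}

lemma abs_sub_le_min_of_lipschitzWith (hM : ∀ u, |f u| ≤ M) (hf : LipschitzWith L f)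
    (u v : ℝ) : |f u - f v| ≤ min (2 * M) (L * |u - v|) :=
  le_min (by linarith [abs_sub (f u) (f v), hM u, hM v])
    (by simpa only [Real.dist_eq] using hf.dist_le_mul u v)

lemma summable_pow_mul_of_abs_le (ha0 : 0 ≤ a) (ha1 : a < 1) (hM : ∀ u, |f u| ≤ M)
    (g : ℕ → ℝ) : Summable fun n => a ^ n * f (g n) :=
  ((summable_geometric_of_lt_one ha0 ha1).mul_right M).of_norm_bounded fun n => by
    rw [norm_mul, norm_pow, Real.norm_eq_abs, Real.norm_eq_abs, abs_of_nonneg ha0]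
    exact mul_le_mul_of_nonneg_left (hM _) (by positivity)

lemma abs_tsum_sub_tsum_le (ha0 : 0 ≤ a) (ha1 : a < 1) (hb : 0 ≤ b) (hM : ∀ u, |f u| ≤ M)
    (hf : LipschitzWith L f) (x h : ℝ) :
    |∑' n : ℕ, a ^ n * f (b ^ n * (x + h)) - ∑' n : ℕ, a ^ n * f (b ^ n * x)| ≤
      ∑' n : ℕ, a ^ n * min (2 * M) (L * (b ^ n * |h|)) := by
  have hM0 : 0 ≤ M := (abs_nonneg _).trans (hM 0)
  have hterm : ∀ n : ℕ, ‖a ^ n * f (b ^ n * (x + h)) - a ^ n * f (b ^ n * x)‖ ≤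
      a ^ n * min (2 * M) (L * (b ^ n * |h|)) := fun n => by
    rw [← mul_sub, norm_mul, norm_pow, Real.norm_eq_abs, Real.norm_eq_abs, abs_of_nonneg ha0]
    gcongr
    refine (abs_sub_le_min_of_lipschitzWith hM hf _ _).trans_eq ?_
    rw [← mul_sub, add_sub_cancel_left, abs_mul, abs_of_nonneg (pow_nonneg hb n)]
  have hmajorant : Summable fun n : ℕ => a ^ n * min (2 * M) (L * (b ^ n * |h|)) :=
    ((summable_geometric_of_lt_one ha0 ha1).mul_left (2 * M)).of_nonneg_of_le
      (fun n => by positivity)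
      (fun n => by rw [mul_comm]; gcongr; exact min_le_left _ _)
  have hnorm := hmajorant.of_nonneg_of_le (fun _ => norm_nonneg _) hterm
  rw [← Real.norm_eq_abs, ← (summable_pow_mul_of_abs_le ha0 ha1 hM _).tsum_sub
    (summable_pow_mul_of_abs_le ha0 ha1 hM _)]
  exact (norm_tsum_le_tsum_norm hnorm).trans (hnorm.tsum_le_tsum hterm hmajorant)

lemma tsum_pow_mul_min_le {c M t : ℝ} (ha0 : 0 ≤ a) (ha1 : a < 1) (hab : 1 < a * b)
    (hc : 0 ≤ c) (hM : 0 ≤ M) (ht : 0 ≤ t) (N : ℕ) :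
    ∑' n : ℕ, a ^ n * min (2 * M) (c * (b ^ n * t)) ≤
      c * ((a * b) ^ N * t) / (a * b - 1) + 2 * M * a ^ N / (1 - a) := by
  have hb : 0 ≤ b := (pos_of_mul_pos_right (by linarith) ha0).le
  have hgeom := summable_geometric_of_lt_one ha0 ha1
  have hsum : Summable fun n : ℕ => a ^ n * min (2 * M) (c * (b ^ n * t)) :=
    (hgeom.mul_left (2 * M)).of_nonneg_of_le (fun n => by positivity)
      (fun n => by rw [mul_comm]; gcongr; exact min_le_left _ _)
  rw [← hsum.sum_add_tsum_nat_add N]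
  gcongr ?_ + ?_
  · calc ∑ n ∈ Finset.range N, a ^ n * min (2 * M) (c * (b ^ n * t))
        ≤ ∑ n ∈ Finset.range N, c * t * (a * b) ^ n := by
          refine Finset.sum_le_sum fun n _ => ?_
          calc _ ≤ a ^ n * (c * (b ^ n * t)) := by gcongr; exact min_le_right _ _
            _ = _ := by ring
      _ = c * t * (((a * b) ^ N - 1) / (a * b - 1)) := by
          rw [← Finset.mul_sum, geom_sum_eq hab.ne']
      _ ≤ c * t * ((a * b) ^ N / (a * b - 1)) := by gcongr; linarith
      _ = _ := by ring
  · calc ∑' n : ℕ, a ^ (n + N) * min (2 * M) (c * (b ^ (n + N) * t))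
        ≤ ∑' n : ℕ, 2 * M * a ^ N * a ^ n :=
          Summable.tsum_le_tsum (fun n => by
              rw [pow_add]
              calc _ ≤ a ^ n * a ^ N * (2 * M) := by gcongr; exact min_le_left _ _
                _ = _ := by ring)
            ((summable_nat_add_iff N).mpr hsum) (hgeom.mul_left _)
      _ = _ := by rw [tsum_mul_left, tsum_geometric_of_lt_one ha0 ha1, div_eq_mul_inv]

end LacunarySeries

section Scaling

variable {B t ξ : ℝ}

lemma rpow_neg_le_rpow_of_one_le_mul (hB : 0 < B) (ht : 0 < t) (hξ : 0 ≤ ξ) (h : 1 ≤ B * t) :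
    B ^ (-ξ) ≤ t ^ ξ :=
  calc B ^ (-ξ) = (B * t) ^ (-ξ) * t ^ ξ := by
        rw [mul_rpow hB.le ht.le, mul_assoc, ← rpow_add ht, neg_add_cancel, rpow_zero, mul_one]
    _ ≤ 1 * t ^ ξ := by gcongr; exact rpow_le_one_of_one_le_of_nonpos h (by linarith)
    _ = t ^ ξ := one_mul _

lemma rpow_one_sub_mul_le_of_mul_le {b : ℝ} (hB : 0 < B) (ht : 0 < t) (hξ : ξ ≤ 1)
    (h : B * t ≤ b) : B ^ (1 - ξ) * t ≤ b ^ (1 - ξ) * t ^ ξ :=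
  calc B ^ (1 - ξ) * t = (B * t) ^ (1 - ξ) * t ^ ξ := by
        rw [mul_rpow hB.le ht.le, mul_assoc, ← rpow_add ht, sub_add_cancel, rpow_one]
    _ ≤ b ^ (1 - ξ) * t ^ ξ := by gcongr

end Scaling

theorem abs_lacunarySeries_sub_le {f : ℝ → ℝ} {M : ℝ} {L : ℝ≥0} {a b ξ : ℝ} (hb : 1 < b)
    (hξ0 : 0 < ξ) (hξ1 : ξ < 1) (ha : a = b ^ (-ξ)) (hM : ∀ u, |f u| ≤ M)
    (hf : LipschitzWith L f) {x h : ℝ} (h0 : 0 < |h|) (h1 : |h| < 1) :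
    |∑' n : ℕ, a ^ n * f (b ^ n * (x + h)) - ∑' n : ℕ, a ^ n * f (b ^ n * x)| ≤
      (L * (a * b) / (a * b - 1) + 2 * M / (1 - a)) * |h| ^ ξ := by
  have hb0 : 0 < b := by linarith
  have ha0 : 0 < a := ha ▸ rpow_pos_of_pos hb0 _
  have ha1 : a < 1 := ha ▸ rpow_lt_one_of_one_lt_of_neg hb (by linarith)
  have hab : a * b = b ^ (1 - ξ) := by rw [ha, sub_eq_neg_add, rpow_add hb0, rpow_one]
  have hab1 : 1 < a * b := hab ▸ one_lt_rpow hb (by linarith)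
  have hM0 : 0 ≤ M := (abs_nonneg _).trans (hM 0)
  obtain ⟨N, hN, hN1⟩ := exists_nat_pow_near (one_le_inv₀ h0 |>.2 h1.le) hb
  have hlow : 1 ≤ b ^ (N + 1) * |h| := (inv_le_iff_one_le_mul₀ h0).1 hN1.le
  have hup : b ^ (N + 1) * |h| ≤ b := by
    rw [← one_div, le_div_iff₀ h0] at hN
    rw [pow_succ, mul_right_comm]
    exact mul_le_of_le_one_left hb0.le hN
  have htail : a ^ (N + 1) ≤ |h| ^ ξ := by
    rw [ha, rpow_pow_comm hb0.le]
    exact rpow_neg_le_rpow_of_one_le_mul (by positivity) h0 hξ0.le hlow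
  have hhead : (a * b) ^ (N + 1) * |h| ≤ a * b * |h| ^ ξ := by
    rw [hab, rpow_pow_comm hb0.le]
    exact rpow_one_sub_mul_le_of_mul_le (by positivity) h0 hξ1.le hup
  calc _ ≤ ∑' n : ℕ, a ^ n * min (2 * M) (L * (b ^ n * |h|)) :=
        abs_tsum_sub_tsum_le ha0.le ha1 hb0.le hM hf x h
    _ ≤ L * ((a * b) ^ (N + 1) * |h|) / (a * b - 1) + 2 * M * a ^ (N + 1) / (1 - a) :=
        tsum_pow_mul_min_le ha0.le ha1 hab1 L.2 hM0 h0.le (N + 1)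
    _ ≤ L * (a * b * |h| ^ ξ) / (a * b - 1) + 2 * M * |h| ^ ξ / (1 - a) := by
        gcongr
    _ = _ := by ring

lemma eq_rpow_neg_log_div_log {a b : ℝ} (ha : 0 < a) (hb : 0 < b) (hb1 : b ≠ 1) :
    a = b ^ (-(log (1 / a) / log b)) := by
  rw [rpow_def_of_pos hb, mul_neg, mul_div_cancel₀ _ (log_ne_zero_of_pos_of_ne_one hb hb1),
    one_div, log_inv, neg_neg, exp_log ha]

lemma exists_holder_bound_of_lipschitzWith_one {a b ξ : ℝ} (hb : 1 < b) (hξ0 : 0 < ξ)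
    (hξ1 : ξ < 1) (ha : a = b ^ (-ξ)) {g : ℝ → ℝ} (hg1 : ∀ u, |g u| ≤ 1)
    (hg : LipschitzWith 1 g) :
    ∃ K > (0:ℝ), ∃ δ > (0:ℝ), ∀ x h : ℝ, 0 < |h| → |h| < δ →
      |(∑' n : ℕ, a ^ n * g (b ^ n * π * (x + h))) -
        ∑' n : ℕ, a ^ n * g (b ^ n * π * x)| ≤ K * |h| ^ ξ := by
  have hab1 : 1 < a * b := by
    rw [ha, ← rpow_add_one (by positivity)]
    exact one_lt_rpow hb (by linarith)
  have ha1 : a < 1 := ha ▸ rpow_lt_one_of_one_lt_of_neg hb (by linarith)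
  have hπ : ∀ (n : ℕ) (y : ℝ), b ^ n * π * y = π * (b ^ n * y) := fun _ _ => by ring
  refine ⟨π * (a * b) / (a * b - 1) + 2 / (1 - a), by positivity, 1, one_pos,
    fun x h h0 h1 => ?_⟩
  simpa [hπ, abs_of_pos pi_pos] using abs_lacunarySeries_sub_le hb hξ0 hξ1 ha
    (f := g ∘ (π • ·)) (fun u => hg1 _) (hg.comp (lipschitzWith_smul π)) (x := x) h0 h1

/-- Hardy's theorem: for `0 < a < 1`, `b > 1` with `a * b > 1` and
`ξ = log(1/a)/log b`, the Weierstrass functions satisfy a uniform Hölder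
condition of order `ξ`: `f(x+h) - f(x) = O(|h|^ξ)` uniformly in `x`. -/
theorem weierstrass_holder_estimate
    (a b ξ : ℝ) (ha0 : 0 < a) (ha1 : a < 1) (hb : 1 < b) (hab : 1 < a * b)
    (hξ : ξ = Real.log (1 / a) / Real.log b) :
    (∃ K > (0:ℝ), ∃ δ > (0:ℝ), ∀ x h : ℝ, 0 < |h| → |h| < δ →
      |(∑' n : ℕ, a ^ n * Real.cos (b ^ n * π * (x + h))) -
        ∑' n : ℕ, a ^ n * Real.cos (b ^ n * π * x)| ≤ K * |h| ^ ξ) ∧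
    (∃ K > (0:ℝ), ∃ δ > (0:ℝ), ∀ x h : ℝ, 0 < |h| → |h| < δ →
      |(∑' n : ℕ, a ^ n * Real.sin (b ^ n * π * (x + h))) -
        ∑' n : ℕ, a ^ n * Real.sin (b ^ n * π * x)| ≤ K * |h| ^ ξ) := by
  have hlogb : 0 < log b := log_pos hb
  have hξ0 : 0 < ξ := hξ ▸ div_pos (log_pos (one_lt_one_div ha0 ha1)) hlogb
  have hξ1 : ξ < 1 := hξ ▸ (div_lt_one hlogb).2
    (log_lt_log (by positivity) ((div_lt_iff₀ ha0).2 (by linarith)))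
  have ha : a = b ^ (-ξ) := hξ ▸ eq_rpow_neg_log_div_log ha0 (by linarith) hb.ne'
  exact ⟨exists_holder_bound_of_lipschitzWith_one hb hξ0 hξ1 ha abs_cos_le_one lipschitzWith_cos,
    exists_holder_bound_of_lipschitzWith_one hb hξ0 hξ1 ha abs_sin_le_one lipschitzWith_sin⟩
end

section
/- (Hardy–Littlewood differentiation lemma) Let y₀ > 0, let λ > 0, let p be a positive integer, and let f : (0, y₀] → ℂ be a function possessing a p-th derivative f^(p) which is continuous on (0, y₀]. Suppose that f(y) = o(y^{−λ}) as y → 0+ and that f^(p)(y) = O(y^{−p−λ}) as y → 0+. Then for every integer q with 0 < q < p, one has f^(q)(y) = o(y^{−q−λ}) as y → 0+. -/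
/-!
Downward from `k = p`, comparing `f^{(k)}` on `[y, b]` with an antiderivative of
`C t^{-k-1-λ}` gives `f^{(k)} = O(y^{-k-λ})`: since `k + 1 + λ > 1` this antiderivative blows
up at `0` and swallows the constant of integration.

Upward from `k = 0`, Taylor's formula for `g = f^{(q)}` on `[y, y + δy]` gives
`δy ‖g'(y)‖ ≤ ‖g(y + δy)‖ + ‖g(y)‖ + sup ‖g''‖ (δy)²`. With `‖g‖ ≤ η y^{-μ}` and
`‖g''‖ ≤ C y^{-μ-2}` this is `‖g'(y)‖ ≤ (2η/δ + Cδ) y^{-μ-1}`; choosing `δ` small and then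
`η` small turns `g = o(y^{-μ})` into `g' = o(y^{-μ-1})`.
-/

open Real Filter Topology Asymptotics Set

theorem eventually_norm_le_mul_rpow {E : Type*} [NormedAddCommGroup E] {f : ℝ → E} {c r : ℝ}
    (h : IsBigOWith c (𝓝[>] (0 : ℝ)) f fun t => t ^ r) :
    ∀ᶠ t in 𝓝[>] (0 : ℝ), ‖f t‖ ≤ c * t ^ r := by
  filter_upwards [h.bound, self_mem_nhdsWithin] with t ht ht0
  rwa [norm_of_nonneg (rpow_nonneg (le_of_lt ht0) r)] at ht

section

variable {E : Type*} [NormedAddCommGroup E] [NormedSpace ℝ E]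

theorem norm_sub_le_of_norm_deriv_le_mul_rpow {g g' : ℝ → E} {C ρ y b : ℝ} (hρ : ρ ≠ 1)
    (hy : 0 < y) (hyb : y ≤ b) (hder : ∀ t ∈ Icc y b, HasDerivAt g (g' t) t)
    (hbound : ∀ t ∈ Icc y b, ‖g' t‖ ≤ C * t ^ (-ρ)) :
    ‖g b - g y‖ ≤ C * (b ^ (1 - ρ) - y ^ (1 - ρ)) / (1 - ρ) := by
  have hρ' : 1 - ρ ≠ 0 := sub_ne_zero.mpr hρ.symm
  have hB : ∀ t ∈ Icc y b, HasDerivAt (fun t => C * (t ^ (1 - ρ) - y ^ (1 - ρ)) / (1 - ρ))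
      (C * t ^ (-ρ)) t := fun t ht => by
    refine ((((hasDerivAt_rpow_const (p := 1 - ρ) (.inl (hy.trans_le ht.1).ne')).sub_const
      (y ^ (1 - ρ))).const_mul C).div_const (1 - ρ)).congr_deriv ?_
    rw [sub_sub_cancel_left]
    field_simp
  refine image_norm_le_of_norm_deriv_right_le_deriv_boundary' (f := fun t => g t - g y)
    (fun t ht => ((hder t ht).continuousAt.sub continuousAt_const).continuousWithinAt)
    (fun t ht => ((hder t (Ico_subset_Icc_self ht)).sub_const (g y)).hasDerivWithinAt)
    (by simp) (fun t ht => (hB t ht).continuousAt.continuousWithinAt)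
    (fun t ht => (hB t (Ico_subset_Icc_self ht)).hasDerivWithinAt)
    (fun t ht => hbound t (Ico_subset_Icc_self ht)) (right_mem_Icc.mpr hyb)

theorem isBigO_rpow_of_isBigO_deriv {g g' : ℝ → E} {ρ : ℝ} (hρ : 0 < ρ)
    (hder : ∀ᶠ t in 𝓝[>] (0 : ℝ), HasDerivAt g (g' t) t)
    (hg' : g' =O[𝓝[>] (0 : ℝ)] fun t => t ^ (-(ρ + 1))) : g =O[𝓝[>] (0 : ℝ)] fun t => t ^ (-ρ) := by
  obtain ⟨C, hC, hCg'⟩ := hg'.exists_pos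
  obtain ⟨b, hb, hsub⟩ :=
    mem_nhdsGT_iff_exists_Ioc_subset.mp (hder.and (eventually_norm_le_mul_rpow hCg'))
  have hconst : (fun _ => g b) =O[𝓝[>] (0 : ℝ)] fun t => t ^ (-ρ) :=
    (isLittleO_const_left.2 <| .inr <|
      tendsto_norm_atTop_atTop.comp (tendsto_rpow_neg_nhdsGT_zero (neg_neg_of_pos hρ))).isBigO
  have hdiff : (fun t => g b - g t) =O[𝓝[>] (0 : ℝ)] fun t => t ^ (-ρ) := by
    refine IsBigO.of_bound (C / ρ) ?_
    filter_upwards [Ioc_mem_nhdsGT hb] with t ht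
    have hIcc : Icc t b ⊆ Ioc 0 b := fun s hs => ⟨ht.1.trans_le hs.1, hs.2⟩
    have key := norm_sub_le_of_norm_deriv_le_mul_rpow (by linarith) ht.1 ht.2
      (fun s hs => (hsub (hIcc hs)).1) (fun s hs => (hsub (hIcc hs)).2)
    rw [norm_of_nonneg (rpow_nonneg ht.1.le _)]
    calc ‖g b - g t‖ ≤ C * (b ^ (1 - (ρ + 1)) - t ^ (1 - (ρ + 1))) / (1 - (ρ + 1)) := key
      _ = C / ρ * (t ^ (-ρ) - b ^ (-ρ)) := by
        rw [show 1 - (ρ + 1) = -ρ by ring]; field_simp; ring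
      _ ≤ C / ρ * t ^ (-ρ) := by gcongr; exact sub_le_self _ (rpow_nonneg hb.le _)
  simpa using hconst.sub hdiff

theorem mul_norm_deriv_le_of_norm_second_deriv_le {g g' g'' : ℝ → E}
    {y h K : ℝ} (hh : 0 ≤ h) (hg : ∀ t ∈ Icc y (y + h), HasDerivAt g (g' t) t)
    (hg' : ∀ t ∈ Icc y (y + h), HasDerivAt g' (g'' t) t)
    (hK : ∀ t ∈ Icc y (y + h), ‖g'' t‖ ≤ K) :
    h * ‖g' y‖ ≤ ‖g (y + h)‖ + ‖g y‖ + K * h ^ 2 := by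
  have hy : y ∈ Icc y (y + h) := left_mem_Icc.mpr (by linarith)
  have hyh : y + h ∈ Icc y (y + h) := right_mem_Icc.mpr (by linarith)
  have hK0 : 0 ≤ K := (norm_nonneg _).trans (hK y hy)
  have hg'_lip : ∀ t ∈ Icc y (y + h), ‖g' t - g' y‖ ≤ K * h := fun t ht =>
    (norm_image_sub_le_of_norm_deriv_le_segment' (fun s hs => (hg' s hs).hasDerivWithinAt)
      (fun s hs => hK s (Ico_subset_Icc_self hs)) t ht).trans
      (mul_le_mul_of_nonneg_left (by linarith [ht.2]) hK0)
  have hrem : ‖(g (y + h) - (y + h) • g' y) - (g y - y • g' y)‖ ≤ K * h * h := by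
    have := norm_image_sub_le_of_norm_deriv_le_segment' (f := fun t => g t - t • g' y)
      (fun t ht => ((hg t ht).sub ((hasDerivAt_id t).smul_const (g' y))).hasDerivWithinAt)
      (fun t ht => by simpa using hg'_lip t (Ico_subset_Icc_self ht)) (y + h) hyh
    simpa using this
  calc h * ‖g' y‖ = ‖(g (y + h) - g y) - ((g (y + h) - (y + h) • g' y) - (g y - y • g' y))‖ := by
        rw [add_smul, show ∀ a b c d : E, (a - b) - ((a - (c + d)) - (b - c)) = d by
          intros; abel, norm_smul, norm_of_nonneg hh]
    _ ≤ ‖g (y + h)‖ + ‖g y‖ + K * h * h :=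
        (norm_sub_le _ _).trans (add_le_add (norm_sub_le _ _) hrem)
    _ = ‖g (y + h)‖ + ‖g y‖ + K * h ^ 2 := by ring

theorem isLittleO_deriv_of_isBigO_second_deriv {g g' g'' : ℝ → E} {μ : ℝ}
    (hμ : 0 < μ) (hg : ∀ᶠ t in 𝓝[>] (0 : ℝ), HasDerivAt g (g' t) t)
    (hg' : ∀ᶠ t in 𝓝[>] (0 : ℝ), HasDerivAt g' (g'' t) t)
    (ho : g =o[𝓝[>] (0 : ℝ)] fun t => t ^ (-μ))
    (hO : g'' =O[𝓝[>] (0 : ℝ)] fun t => t ^ (-(μ + 2))) :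
    g' =o[𝓝[>] (0 : ℝ)] fun t => t ^ (-(μ + 1)) := by
  obtain ⟨C, hC, hCg''⟩ := hO.exists_pos
  refine isLittleO_iff.mpr fun ε hε => ?_
  set δ := min 1 (ε / (2 * C))
  have hδ : 0 < δ := lt_min one_pos (by positivity)
  have hCδ : C * δ ≤ ε / 2 := by
    calc C * δ ≤ C * (ε / (2 * C)) := by gcongr; exact min_le_right _ _
      _ = ε / 2 := by field_simp
  obtain ⟨b, hb, hsub⟩ := mem_nhdsGT_iff_exists_Ioc_subset.mp ((hg.and hg').and
    ((eventually_norm_le_mul_rpow hCg'').and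
      (eventually_norm_le_mul_rpow (ho.def' (by positivity : 0 < ε * δ / 4)))))
  filter_upwards [Ioc_mem_nhdsGT (half_pos hb)] with y ⟨hy, hyb⟩
  have hδy : δ * y ≤ y := mul_le_of_le_one_left hy.le (min_le_left _ _)
  have hδy0 : 0 < δ * y := mul_pos hδ hy
  have hIcc : Icc y (y + δ * y) ⊆ Ioc 0 b := fun t ht => ⟨hy.trans_le ht.1, by linarith [ht.2]⟩
  have hgy : ∀ t ∈ Icc y (y + δ * y), ‖g t‖ ≤ ε * δ / 4 * y ^ (-μ) := fun t ht =>
    (hsub (hIcc ht)).2.2.trans <| mul_le_mul_of_nonneg_left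
      (rpow_le_rpow_of_nonpos hy ht.1 (by linarith)) (by positivity)
  have key := mul_norm_deriv_le_of_norm_second_deriv_le (K := C * y ^ (-(μ + 2)))
    (by positivity) (fun t ht => (hsub (hIcc ht)).1.1) (fun t ht => (hsub (hIcc ht)).1.2)
    (fun t ht => (hsub (hIcc ht)).2.1.trans <| mul_le_mul_of_nonneg_left
      (rpow_le_rpow_of_nonpos hy ht.1 (by linarith)) hC.le)
  have hy1 : y ^ (-(μ + 1)) = y ^ (-μ) / y := by
    rw [neg_add, rpow_add hy, rpow_neg_one, div_eq_mul_inv]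
  have hy2 : y ^ (-(μ + 2)) = y ^ (-μ) / y ^ 2 := by
    rw [neg_add, rpow_add hy, rpow_neg hy.le 2, rpow_two, div_eq_mul_inv]
  rw [norm_of_nonneg (rpow_nonneg hy.le _), hy1, mul_div_assoc', le_div_iff₀ hy]
  refine le_of_mul_le_mul_left ?_ hδ
  calc δ * (‖g' y‖ * y) = δ * y * ‖g' y‖ := by ring
    _ ≤ ‖g (y + δ * y)‖ + ‖g y‖ + C * y ^ (-(μ + 2)) * (δ * y) ^ 2 := key
    _ ≤ ε * δ / 4 * y ^ (-μ) + ε * δ / 4 * y ^ (-μ) + C * (y ^ (-μ) / y ^ 2) * (δ * y) ^ 2 := by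
        rw [hy2]
        gcongr
        · exact hgy _ (right_mem_Icc.mpr (by linarith))
        · exact hgy _ (left_mem_Icc.mpr (by linarith))
    _ = δ * y ^ (-μ) * (ε / 2 + C * δ) := by field_simp; ring
    _ ≤ δ * y ^ (-μ) * ε := by gcongr; linarith
    _ = δ * (ε * y ^ (-μ)) := by ring

theorem isLittleO_of_hasDerivAt_chain {g : ℕ → ℝ → E} {lam : ℝ}
    (hlam : 0 < lam) {p : ℕ}
    (hder : ∀ k < p, ∀ᶠ t in 𝓝[>] (0 : ℝ), HasDerivAt (g k) (g (k + 1) t) t)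
    (ho : g 0 =o[𝓝[>] (0 : ℝ)] fun t => t ^ (-lam))
    (hO : g p =O[𝓝[>] (0 : ℝ)] fun t => t ^ (-((p : ℝ) + lam))) :
    ∀ q < p, g q =o[𝓝[>] (0 : ℝ)] fun t => t ^ (-((q : ℝ) + lam)) := by
  have hcast (k m : ℕ) : ((k + m : ℕ) : ℝ) + lam = ((k : ℝ) + lam) + m := by
    push_cast; ring
  have hbigO : ∀ k ≤ p, g k =O[𝓝[>] (0 : ℝ)] fun t => t ^ (-((k : ℝ) + lam)) := by
    intro k hk
    induction hk using Nat.decreasingInduction with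
    | self => exact hO
    | of_succ k hk ih =>
      exact isBigO_rpow_of_isBigO_deriv (by positivity) (hder k hk)
        (by rwa [hcast, Nat.cast_one] at ih)
  intro q hq
  induction q with
  | zero => simpa using ho
  | succ q ih =>
    rw [hcast, Nat.cast_one]
    exact isLittleO_deriv_of_isBigO_second_deriv (by positivity) (hder q (by omega))
      (hder (q + 1) hq) (ih (by omega))
      (by simpa only [hcast, Nat.cast_ofNat] using hbigO (q + 2) hq)

end

theorem ContDiffOn.hasDerivAt_iteratedDerivWithin {𝕜 F : Type*} [NontriviallyNormedField 𝕜]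
    [NormedAddCommGroup F] [NormedSpace 𝕜 F] {f : 𝕜 → F} {s : Set 𝕜} {n : WithTop ℕ∞} {k : ℕ}
    {x : 𝕜} (hf : ContDiffOn 𝕜 n f s) (hs : UniqueDiffOn 𝕜 s) (hk : k < n) (hx : s ∈ 𝓝 x) :
    HasDerivAt (iteratedDerivWithin k f s) (iteratedDerivWithin (k + 1) f s x) x := by
  rw [iteratedDerivWithin_succ]
  exact ((hf.differentiableOn_iteratedDerivWithin hk hs) x (mem_of_mem_nhds hx)).hasDerivWithinAt
    |>.hasDerivAt hx

theorem hardy_littlewood_differentiation_lemma_general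
    (y₀ lam : ℝ) (hy₀ : 0 < y₀) (hlam : 0 < lam) (p : ℕ)
    (f : ℝ → ℂ)
    (hf : ContDiffOn ℝ p f (Set.Ioc 0 y₀))
    (ho : (fun y : ℝ => f y) =o[𝓝[>] 0] fun y : ℝ => y ^ (-lam))
    (hO : (fun y : ℝ => iteratedDerivWithin p f (Set.Ioc 0 y₀) y)
        =O[𝓝[>] 0] fun y : ℝ => y ^ (-((p : ℝ) + lam))) :
    ∀ q : ℕ, 0 < q → q < p →
      (fun y : ℝ => iteratedDerivWithin q f (Set.Ioc 0 y₀) y)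
        =o[𝓝[>] 0] fun y : ℝ => y ^ (-((q : ℝ) + lam)) := by
  refine fun q _ hqp => isLittleO_of_hasDerivAt_chain
    (g := fun k => iteratedDerivWithin k f (Set.Ioc 0 y₀)) hlam (fun k hk => ?_)
    (by simpa using ho) hO q hqp
  filter_upwards [Ioo_mem_nhdsGT hy₀] with t ht
  exact hf.hasDerivAt_iteratedDerivWithin (uniqueDiffOn_Ioc 0 y₀) (by exact_mod_cast hk)
    (mem_of_superset (Ioo_mem_nhds ht.1 ht.2) Ioo_subset_Ioc_self)

/-- Hardy–Littlewood differentiation lemma: if `f` is `p` times continuously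
differentiable on `(0, y₀]`, `f(y) = o(y^{-λ})` and `f^{(p)}(y) = O(y^{-p-λ})`
as `y → 0+`, then `f^{(q)}(y) = o(y^{-q-λ})` for every `0 < q < p`. -/
theorem hardy_littlewood_differentiation_lemma
    (y₀ lam : ℝ) (hy₀ : 0 < y₀) (hlam : 0 < lam) (p : ℕ) (hp : 0 < p)
    (f : ℝ → ℂ)
    (hf : ContDiffOn ℝ p f (Set.Ioc 0 y₀))
    (ho : (fun y : ℝ => f y) =o[𝓝[>] 0] fun y : ℝ => y ^ (-lam))
    (hO : (fun y : ℝ => iteratedDerivWithin p f (Set.Ioc 0 y₀) y)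
        =O[𝓝[>] 0] fun y : ℝ => y ^ (-((p : ℝ) + lam))) :
    ∀ q : ℕ, 0 < q → q < p →
      (fun y : ℝ => iteratedDerivWithin q f (Set.Ioc 0 y₀) y)
        =o[𝓝[>] 0] fun y : ℝ => y ^ (-((q : ℝ) + lam)) :=
  hardy_littlewood_differentiation_lemma_general y₀ lam hy₀ hlam p f hf ho hO
end

section
/- Let b > 1 and ρ > 0 be real numbers, and define f(y) = ∑_{n=0}^∞ b^{nρ} e^{−bⁿ y} for y > 0. Then f(y) = O(y^{−ρ}) as y → 0+; i.e. there exist constants K > 0 and δ > 0 such that f(y) ≤ K y^{−ρ} for all 0 < y < δ. -/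
/-!
Writing `x = bⁿ y`, the `n`-th term is `y^{-ρ} · x^ρ e^{-x}`, and `x^ρ e^{-x} ≤ C min(x^ρ, x^{-ρ})`
because `x^{2ρ} e^{-x}` is bounded. If `q = b^ρ` and `y^ρ ∈ [q^j, q^{j+1})`, then
`x^ρ ∈ [q^{n+j}, q^{n+j+1}]`, so `min(x^ρ, x^{-ρ}) ≤ q · q^{-|n+j|}`; the sum over `n` is bounded by the
two-sided geometric series `∑_{k ∈ ℤ} q^{-|k|} = (q+1)/(q-1)`, uniformly in `y > 0`.
-/

open Real Set

theorem rpow_mul_exp_neg_le {s x : ℝ} (hs : 0 < s) (hx : 0 ≤ x) :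
    x ^ s * exp (-x) ≤ (s / exp 1) ^ s := by
  have key : (x / s) ^ s ≤ exp (x / s - 1) ^ s := by
    gcongr
    linarith [add_one_le_exp (x / s - 1)]
  rw [← exp_mul, sub_mul, div_mul_cancel₀ _ hs.ne', one_mul, div_rpow hx hs.le,
    div_le_iff₀ (rpow_pos_of_pos hs _), exp_sub] at key
  rw [div_rpow hs.le (exp_pos 1).le, exp_one_rpow, exp_neg, ← div_eq_mul_inv,
    div_le_div_iff₀ (exp_pos _) (exp_pos _)]
  calc x ^ s * exp s ≤ exp x / exp s * s ^ s * exp s := by gcongr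
    _ = s ^ s * exp x := by field_simp

theorem exists_rpow_mul_exp_neg_le_mul_min {ρ : ℝ} (hρ : 0 < ρ) :
    ∃ C > 0, ∀ x > 0, x ^ ρ * exp (-x) ≤ C * min (x ^ ρ) (x ^ ρ)⁻¹ := by
  refine ⟨max 1 ((2 * ρ / exp 1) ^ (2 * ρ)), by positivity, fun x hx => ?_⟩
  rw [mul_min_of_nonneg _ _ (by positivity)]
  refine le_min ?_ ?_
  · calc x ^ ρ * exp (-x) ≤ x ^ ρ * 1 := by gcongr; simpa using hx.le
      _ ≤ _ := by rw [mul_comm]; gcongr; exact le_max_left _ _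
  · rw [← div_eq_mul_inv, le_div_iff₀ (by positivity)]
    calc x ^ ρ * exp (-x) * x ^ ρ = x ^ (2 * ρ) * exp (-x) := by
          rw [two_mul, rpow_add hx]; ring
      _ ≤ (2 * ρ / exp 1) ^ (2 * ρ) := rpow_mul_exp_neg_le (by positivity) hx.le
      _ ≤ _ := le_max_right _ _

theorem min_inv_le_mul_zpow_neg_abs {q u : ℝ} {k : ℤ} (hq : 1 ≤ q)
    (hu : u ∈ Icc (q ^ k) (q ^ (k + 1))) : min u u⁻¹ ≤ q * q ^ (-|k|) := by
  have hq0 : 0 < q := by linarith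
  rcases le_or_gt 0 k with hk | hk
  · refine (min_le_right _ _).trans ?_
    rw [abs_of_nonneg hk, zpow_neg]
    calc u⁻¹ ≤ (q ^ k)⁻¹ := inv_anti₀ (by positivity) hu.1
      _ ≤ q * (q ^ k)⁻¹ := le_mul_of_one_le_left (by positivity) hq
  · refine (min_le_left _ _).trans ?_
    rw [abs_of_neg hk, neg_neg, ← zpow_one_add₀ hq0.ne', add_comm]
    exact hu.2

theorem hasSum_zpow_neg_abs {q : ℝ} (hq : 1 < q) :
    HasSum (fun k : ℤ => q ^ (-|k|)) ((q + 1) / (q - 1)) := by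
  have hgeom := hasSum_geometric_of_lt_one (inv_nonneg.2 (by linarith)) (inv_lt_one_of_one_lt₀ hq)
  have hnat : HasSum (fun n : ℕ => q ^ (-|(n : ℤ)|)) (1 - q⁻¹)⁻¹ := by
    simpa only [Nat.abs_cast, zpow_neg, zpow_natCast, inv_pow] using hgeom
  have hneg : HasSum (fun n : ℕ => q ^ (-|-((n : ℤ) + 1)|)) (q⁻¹ * (1 - q⁻¹)⁻¹) := by
    have h : ∀ n : ℕ, -|-((n : ℤ) + 1)| = -((n + 1 : ℕ) : ℤ) := fun n => by
      rw [abs_neg, abs_of_nonneg (by positivity)]; push_cast; rfl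
    simpa only [h, zpow_neg, zpow_natCast, inv_pow, pow_succ', mul_inv] using hgeom.mul_left q⁻¹
  have hsum : (1 - q⁻¹)⁻¹ + q⁻¹ * (1 - q⁻¹)⁻¹ = (q + 1) / (q - 1) := by
    have hq1 : q - 1 ≠ 0 := by linarith
    field_simp
  rw [← hsum]
  exact HasSum.of_nat_of_neg_add_one (f := fun k : ℤ => q ^ (-|k|)) hnat hneg

theorem summable_zpow_neg_abs_natCast_add {q : ℝ} (hq : 1 < q) (j : ℤ) :
    Summable fun n : ℕ => q ^ (-|(n : ℤ) + j|) :=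
  (hasSum_zpow_neg_abs hq).summable.comp_injective (i := fun n : ℕ => (n : ℤ) + j)
    fun m n h => by simpa using h

theorem tsum_zpow_neg_abs_natCast_add_le {q : ℝ} (hq : 1 < q) (j : ℤ) :
    ∑' n : ℕ, q ^ (-|(n : ℤ) + j|) ≤ (q + 1) / (q - 1) := by
  rw [← (hasSum_zpow_neg_abs hq).tsum_eq]
  exact tsum_comp_le_tsum_of_inj (hasSum_zpow_neg_abs hq).summable
    (fun k => zpow_nonneg (by linarith) _) (i := fun n : ℕ => (n : ℤ) + j) fun m n h => by simpa using h

theorem rpow_natCast_mul_mul_exp_eq {b y : ℝ} (hb : 0 ≤ b) (hy : 0 < y) (n : ℕ) (ρ : ℝ) :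
    b ^ ((n : ℝ) * ρ) * exp (-(b ^ n) * y) =
      y ^ (-ρ) * ((b ^ n * y) ^ ρ * exp (-(b ^ n * y))) := by
  rw [rpow_natCast_mul hb, mul_rpow (by positivity) hy.le, rpow_neg hy.le, neg_mul]
  field_simp

theorem mul_rpow_mem_Icc_zpow_add {b y ρ : ℝ} {j : ℤ} (hb : 0 < b) (hy : 0 ≤ y)
    (hj : y ^ ρ ∈ Icc ((b ^ ρ) ^ j) ((b ^ ρ) ^ (j + 1))) (n : ℕ) :
    (b ^ n * y) ^ ρ ∈ Icc ((b ^ ρ) ^ ((n : ℤ) + j)) ((b ^ ρ) ^ ((n : ℤ) + j + 1)) := by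
  have hq : b ^ ρ ≠ 0 := (rpow_pos_of_pos hb ρ).ne'
  rw [mul_rpow (by positivity) hy, ← rpow_pow_comm hb.le, add_assoc, zpow_add₀ hq, zpow_add₀ hq,
    zpow_natCast]
  exact ⟨by gcongr; exact hj.1, by gcongr; exact hj.2⟩

/-- For `b > 1` and `ρ > 0`, the function `f(y) = ∑ b^{nρ} e^{-bⁿ y}` satisfies
`f(y) = O(y^{-ρ})` as `y → 0+`. -/
theorem sum_exp_bigO
    (b ρ : ℝ) (hb : 1 < b) (hρ : 0 < ρ) :
    ∃ K > (0:ℝ), ∃ δ > (0:ℝ), ∀ y : ℝ, 0 < y → y < δ →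
      (∑' n : ℕ, b ^ ((n : ℝ) * ρ) * Real.exp (-(b ^ n) * y)) ≤ K * y ^ (-ρ) := by
  obtain ⟨C, hC0, hC⟩ := exists_rpow_mul_exp_neg_le_mul_min hρ
  have hb0 : 0 < b := zero_lt_one.trans hb
  set q := b ^ ρ
  have hq : 1 < q := one_lt_rpow hb hρ
  have hq1 : 0 < q - 1 := sub_pos.2 hq
  refine ⟨C * q * ((q + 1) / (q - 1)), by positivity, 1, one_pos, fun y hy _ => ?_⟩
  obtain ⟨j, hj⟩ := exists_mem_Ico_zpow (rpow_pos_of_pos hy ρ) hq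
  have hterm (n : ℕ) : b ^ ((n : ℝ) * ρ) * exp (-(b ^ n) * y) ≤
      C * q * y ^ (-ρ) * q ^ (-|(n : ℤ) + j|) := by
    have hu := mul_rpow_mem_Icc_zpow_add hb0 hy.le (Ico_subset_Icc_self hj) n
    calc _ = y ^ (-ρ) * ((b ^ n * y) ^ ρ * exp (-(b ^ n * y))) :=
          rpow_natCast_mul_mul_exp_eq hb0.le hy n ρ
      _ ≤ y ^ (-ρ) * (C * (q * q ^ (-|(n : ℤ) + j|))) := by
          gcongr y ^ (-ρ) * ?_
          exact (hC _ (by positivity)).trans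
            (mul_le_mul_of_nonneg_left (min_inv_le_mul_zpow_neg_abs hq.le hu) hC0.le)
      _ = _ := by ring
  have hsum := (summable_zpow_neg_abs_natCast_add hq j).mul_left (C * q * y ^ (-ρ))
  calc _ ≤ ∑' n : ℕ, C * q * y ^ (-ρ) * q ^ (-|(n : ℤ) + j|) :=
        Summable.tsum_le_tsum hterm (.of_nonneg_of_le (fun n => by positivity) hterm hsum) hsum
    _ = C * q * y ^ (-ρ) * ∑' n : ℕ, q ^ (-|(n : ℤ) + j|) := tsum_mul_left
    _ ≤ C * q * y ^ (-ρ) * ((q + 1) / (q - 1)) := by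
        gcongr
        exact tsum_zpow_neg_abs_natCast_add_le hq j
    _ = _ := by ring
end

section
/- Let b ≥ 2 be an integer and let x be a real number. If sin(bⁿπx) → 0 as n → ∞, then there exist integers p and q with q ≥ 0 such that x = p / b^q. Consequently sin(bⁿπx) = 0 for all n ≥ q. -/
/-!
Write `‖t‖ = |t - round t|` for the distance to the nearest integer. Jordan's inequality gives
`2‖t‖ ≤ |sin (π t)|`, so `‖bⁿ x‖ → 0`. Multiplying by `b` multiplies `‖t‖` by `b` as long as
`b‖t‖ < 1/2`, so once `‖bⁿ x‖` stays below `1/(2b)` it grows geometrically, unless it is `0`.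
Hence `b^q x` is an integer for some `q`.
-/

open Real Filter Topology

theorem two_mul_abs_sub_round_le_abs_sin (t : ℝ) : 2 * |t - round t| ≤ |sin (π * t)| := by
  have hshift : π * t = π * (t - round t) + round t * π := by ring
  have hsmall : |π * (t - round t)| ≤ π / 2 := by
    rw [abs_mul, abs_of_pos pi_pos]
    nlinarith [abs_sub_round t, pi_pos]
  calc 2 * |t - round t| = 2 / π * |π * (t - round t)| := by
        rw [abs_mul, abs_of_pos pi_pos]; field_simp
    _ ≤ |sin (π * (t - round t))| := mul_abs_le_abs_sin hsmall
    _ = |sin (π * t)| := by rw [hshift, sin_add_int_mul_pi, abs_mul, abs_neg_one_zpow, one_mul]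

section Round

variable {α : Type*} [Field α] [LinearOrder α] [IsStrictOrderedRing α] [FloorRing α]

theorem abs_sub_round_natCast_mul {b : ℕ} {t : α} (h : b * |t - round t| < 1 / 2) :
    |b * t - round (b * t)| = b * |t - round t| := by
  set y : α := b * (t - round t)
  have hy : |y| < 1 / 2 := by rwa [abs_mul, Nat.abs_cast]
  have hround : round y = 0 :=
    round_eq_zero_iff.2 ⟨by linarith [neg_abs_le y], by linarith [le_abs_self y]⟩
  have hbt : (b : α) * t = y + ((b * round t : ℤ) : α) := by push_cast; ring
  rw [hbt, round_add_intCast, hround, zero_add, add_sub_cancel_right, abs_mul, Nat.abs_cast]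

end Round

theorem pow_mul_eq_round_of_forall_ge {b : ℕ} (hb : 1 < b) {x : ℝ} {N : ℕ}
    (h : ∀ n ≥ N, b * |b ^ n * x - round ((b : ℝ) ^ n * x)| < 1 / 2) :
    b ^ N * x = round ((b : ℝ) ^ N * x) := by
  set c := |b ^ N * x - round ((b : ℝ) ^ N * x)|
  have hgrow : ∀ k, |b ^ (N + k) * x - round ((b : ℝ) ^ (N + k) * x)| = b ^ k * c := by
    intro k
    induction k with
    | zero => simp [c]
    | succ k ih =>
      have hstep := abs_sub_round_natCast_mul (h (N + k) (Nat.le_add_right N k))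
      rw [← mul_assoc, ← pow_succ'] at hstep
      rw [← add_assoc, hstep, ih, pow_succ']
      ring
  suffices c = 0 from sub_eq_zero.1 (abs_eq_zero.1 this)
  by_contra hc
  have hc_pos : 0 < c := lt_of_le_of_ne (abs_nonneg _) (Ne.symm hc)
  obtain ⟨k, hk⟩ := pow_unbounded_of_one_lt (1 / 2 / c) (Nat.one_lt_cast.2 hb)
  have hbound := hgrow k ▸ abs_sub_round ((b : ℝ) ^ (N + k) * x)
  rw [div_lt_iff₀ hc_pos] at hk
  linarith

/-- If `b ≥ 2` is an integer and `sin(bⁿ π x) → 0` as `n → ∞`, then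
`x = p / b^q` for some integers `p`, `q ≥ 0`, and consequently
`sin(bⁿ π x) = 0` for all `n ≥ q`. -/
theorem sin_pow_tendsto_zero_rat
    (b : ℕ) (hb : 2 ≤ b) (x : ℝ)
    (h : Tendsto (fun n : ℕ => Real.sin ((b : ℝ) ^ n * π * x)) atTop (𝓝 0)) :
    ∃ (p : ℤ) (q : ℕ), x = (p : ℝ) / (b : ℝ) ^ q ∧
      ∀ n : ℕ, q ≤ n → Real.sin ((b : ℝ) ^ n * π * x) = 0 := by
  have hdist : Tendsto (fun n : ℕ => |b ^ n * x - round ((b : ℝ) ^ n * x)|) atTop (𝓝 0) := by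
    refine squeeze_zero (fun n => abs_nonneg _) (fun n => ?_) (by simpa using h.abs.div_const 2)
    have := two_mul_abs_sub_round_le_abs_sin ((b : ℝ) ^ n * x)
    rw [← mul_assoc, mul_comm π] at this
    linarith
  have hscaled := hdist.const_mul (b : ℝ)
  rw [mul_zero] at hscaled
  obtain ⟨q, hq⟩ := eventually_atTop.1 (hscaled.eventually (gt_mem_nhds one_half_pos))
  have hint := pow_mul_eq_round_of_forall_ge hb hq
  refine ⟨round ((b : ℝ) ^ q * x), q, ?_, fun n hn => ?_⟩
  · rw [← hint]; field_simp
  · obtain ⟨k, rfl⟩ := Nat.exists_eq_add_of_le hn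
    rw [show (b : ℝ) ^ (q + k) * π * x = ((b ^ k * round ((b : ℝ) ^ q * x) : ℤ) : ℝ) * π by
      push_cast; rw [← hint]; ring]
    exact sin_int_mul_pi _
end

section
/- Let b ≥ 3 be an odd integer and let x be a real number. If cos(bⁿπx) → 0 as n → ∞, then there exist integers p and q with q ≥ 0 such that x = (p + 1/2) / b^q. Consequently cos(bⁿπx) = 0 for all n ≥ q. -/
/-!
Write `y = m + 1/2 + δ(y)` with `m ∈ ℤ`, `|δ(y)| ≤ 1/2` (`δ = halfIntOffset`), so that
`|cos (π y)| = |sin (π δ(y))|` and hence `2 |δ(y)| ≤ |cos (π y)|`. Multiplication by an odd integer `b`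
maps half-integers to half-integers, so `δ(b y) = b δ(y)` as long as `|b δ(y)| < 1/2`. If
`cos (bⁿ π x) → 0`, this holds for `y = bⁿ x` and all large `n`, so `δ(bⁿ x)` grows geometrically from
some `N` on while staying bounded: it vanishes, i.e. every `bⁿ x` with `n ≥ N` is a half-integer.
-/

open Real Filter Topology

noncomputable def halfIntOffset (y : ℝ) : ℝ := y - 1 / 2 - round (y - 1 / 2)

lemma abs_halfIntOffset_le (y : ℝ) : |halfIntOffset y| ≤ 1 / 2 := abs_sub_round (y - 1 / 2)

lemma round_add_half_add_halfIntOffset (y : ℝ) :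
    (round (y - 1 / 2) : ℝ) + 1 / 2 + halfIntOffset y = y := by
  unfold halfIntOffset; ring

lemma abs_cos_pi_mul (y : ℝ) : |cos (π * y)| = |sin (π * halfIntOffset y)| := by
  have harg : π * y = (π * halfIntOffset y + π / 2) + (round (y - 1 / 2) : ℤ) * π := by
    unfold halfIntOffset; ring
  rw [harg, cos_add_int_mul_pi, cos_add_pi_div_two, abs_mul, abs_zpow, abs_neg, abs_one,
    one_zpow, one_mul, abs_neg]

lemma two_mul_abs_halfIntOffset_le_abs_cos (y : ℝ) :
    2 * |halfIntOffset y| ≤ |cos (π * y)| := by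
  have hδ : |π * halfIntOffset y| ≤ π / 2 := by
    rw [abs_mul, abs_of_pos pi_pos]
    nlinarith [abs_halfIntOffset_le y, pi_pos]
  calc 2 * |halfIntOffset y| = 2 / π * |π * halfIntOffset y| := by
        rw [abs_mul, abs_of_pos pi_pos]; field_simp
    _ ≤ |cos (π * y)| := abs_cos_pi_mul y ▸ mul_abs_le_abs_sin hδ

lemma halfIntOffset_intCast_mul {m : ℤ} (hm : Odd m) {y : ℝ}
    (hy : |(m : ℝ) * halfIntOffset y| < 1 / 2) :
    halfIntOffset (m * y) = m * halfIntOffset y := by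
  obtain ⟨c, hc⟩ := hm
  have harg : (m : ℝ) * y - 1 / 2 = ((m * round (y - 1 / 2) + c : ℤ) : ℝ) + m * halfIntOffset y := by
    unfold halfIntOffset; push_cast [hc]; ring
  have hround : round ((m : ℝ) * halfIntOffset y) = 0 :=
    round_eq_zero_iff.2 ⟨(abs_lt.1 hy).1.le, (abs_lt.1 hy).2⟩
  rw [halfIntOffset, harg, round_intCast_add, hround]
  push_cast
  ring

lemma eq_zero_of_forall_abs_pow_mul_le {r a C : ℝ} (hr : 1 < |r|) (h : ∀ k : ℕ, |r ^ k * a| ≤ C) :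
    a = 0 := by
  by_contra ha
  have ha' : 0 < |a| := abs_pos.2 ha
  obtain ⟨k, hk⟩ := pow_unbounded_of_one_lt (C / |a|) hr
  have hbound := h k
  rw [abs_mul, abs_pow] at hbound
  rw [div_lt_iff₀ ha'] at hk
  linarith

lemma eq_zero_of_abs_le_of_mul_succ {u : ℕ → ℝ} {r C : ℝ} (hr : 1 < |r|) (hC : ∀ n, |u n| ≤ C)
    {N : ℕ} (hu : ∀ n ≥ N, u (n + 1) = r * u n) {n : ℕ} (hn : N ≤ n) : u n = 0 := by
  have hpow : ∀ k, u (n + k) = r ^ k * u n := by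
    intro k
    induction k with
    | zero => simp
    | succ k ih => rw [← add_assoc, hu _ (by omega), ih, pow_succ']; ring
  exact eq_zero_of_forall_abs_pow_mul_le hr fun k => hpow k ▸ hC (n + k)

/-- If `b ≥ 3` is an odd integer and `cos(bⁿ π x) → 0` as `n → ∞`, then
`x = (p + 1/2) / b^q` for some integers `p`, `q ≥ 0`, and consequently
`cos(bⁿ π x) = 0` for all `n ≥ q`. -/
theorem cos_pow_tendsto_zero_rat
    (b : ℤ) (hb : 3 ≤ b) (hodd : Odd b) (x : ℝ)
    (h : Tendsto (fun n : ℕ => Real.cos ((b : ℝ) ^ n * π * x)) atTop (𝓝 0)) :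
    ∃ (p : ℤ) (q : ℕ), x = ((p : ℝ) + 1 / 2) / (b : ℝ) ^ q ∧
      ∀ n : ℕ, q ≤ n → Real.cos ((b : ℝ) ^ n * π * x) = 0 := by
  have hb3 : (3 : ℝ) ≤ b := by exact_mod_cast hb
  have hbpos : (0 : ℝ) < b := by linarith
  have hcos : ∀ n, cos ((b : ℝ) ^ n * π * x) = cos (π * ((b : ℝ) ^ n * x)) := fun n => by
    congr 1; ring
  have hsmall : ∀ᶠ n in atTop, |(b : ℝ) * halfIntOffset ((b : ℝ) ^ n * x)| < 1 / 2 := by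
    have hlt : ∀ᶠ n in atTop, |cos ((b : ℝ) ^ n * π * x)| < 1 / b :=
      Tendsto.eventually_lt_const (by positivity) (by simpa using h.abs)
    filter_upwards [hlt] with n hn
    rw [hcos, lt_div_iff₀ hbpos] at hn
    have hoffset := two_mul_abs_halfIntOffset_le_abs_cos ((b : ℝ) ^ n * x)
    rw [abs_mul, abs_of_pos hbpos]
    nlinarith
  obtain ⟨N, hN⟩ := hsmall.exists_forall_of_atTop
  have hstep : ∀ n ≥ N, halfIntOffset ((b : ℝ) ^ (n + 1) * x)
      = b * halfIntOffset ((b : ℝ) ^ n * x) := fun n hn => by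
    rw [pow_succ', mul_assoc]
    exact halfIntOffset_intCast_mul hodd (hN n hn)
  have hzero : ∀ n ≥ N, halfIntOffset ((b : ℝ) ^ n * x) = 0 := fun n =>
    eq_zero_of_abs_le_of_mul_succ (u := fun n => halfIntOffset ((b : ℝ) ^ n * x))
      (by rw [abs_of_pos hbpos]; linarith) (fun n => abs_halfIntOffset_le _) hstep
  refine ⟨round ((b : ℝ) ^ N * x - 1 / 2), N, ?_, fun n hn => ?_⟩
  · have hx := round_add_half_add_halfIntOffset ((b : ℝ) ^ N * x)
    rw [hzero N le_rfl, add_zero] at hx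
    rw [hx, mul_div_cancel_left₀ _ (pow_ne_zero N hbpos.ne')]
  · rw [← abs_eq_zero, hcos, abs_cos_pi_mul, hzero n hn, mul_zero, sin_zero, abs_zero]
end

section
/- (Bernstein) Let f : ℝ → ℂ be a 2π-periodic function satisfying a Lipschitz (Hölder) condition of order α > 1/2: there is a constant K such that |f(x + h) − f(x)| ≤ K |h|^α for all x, h ∈ ℝ. Then the Fourier series of f converges absolutely, i.e. ∑_{n∈ℤ} |c_n| < ∞, where c_n = (1/2π) ∫_0^{2π} f(θ) e^{−inθ} dθ are the Fourier coefficients of f. -/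
/-!
For a shift `h`, the function `f (· + h) - f` has Fourier coefficients `(e^{inh} - 1) c_n` and
sup norm at most `K |h|^α`, so Bessel's inequality gives `∑ |e^{inh} - 1|² |c_n|² ≤ K² |h|^{2α}`.
With `h = 2π / 2^{m+2}` every `n` in the dyadic block `2^m ≤ |n| < 2^{m+1}` has `nh ∈ [π/2, π]`,
hence `|e^{inh} - 1|² ≥ 2`. The block has at most `2^{m+1}` elements, so Cauchy–Schwarz bounds
its sum of `|c_n|` by a constant times `(2^{1/2-α})^m`, which is summable over `m` as `α > 1/2`.
-/

open Real Filter Topology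

lemma summable_of_dyadic_sum_le_geometric {a : ℤ → ℝ} (ha : ∀ n, 0 ≤ a n) {C r : ℝ}
    (hr₀ : 0 ≤ r) (hr₁ : r < 1)
    (h : ∀ (m : ℕ) (s : Finset ℤ), (∀ n ∈ s, n.natAbs ∈ Finset.Ico (2 ^ m) (2 ^ (m + 1))) →
      ∑ n ∈ s, a n ≤ C * r ^ m) :
    Summable a := by
  have hC : 0 ≤ C := by simpa using h 0 ∅ (by simp)
  refine summable_of_sum_le ha (c := a 0 + C * (1 - r)⁻¹) fun u ↦ ?_
  set M := (u.sup fun n ↦ Nat.log 2 n.natAbs) + 1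
  have hmaps : ∀ n ∈ u.erase 0, Nat.log 2 n.natAbs ∈ Finset.range M := fun n hn ↦
    Finset.mem_range.mpr <| Nat.lt_succ_of_le <|
      Finset.le_sup (f := fun n : ℤ ↦ Nat.log 2 n.natAbs) (Finset.mem_of_mem_erase hn)
  have hblock (m : ℕ) : ∑ n ∈ u.erase 0 with Nat.log 2 n.natAbs = m, a n ≤ C * r ^ m := by
    refine h m _ fun n hn ↦ ?_
    obtain ⟨hnu, rfl⟩ := Finset.mem_filter.mp hn
    have hn₀ : n.natAbs ≠ 0 := Int.natAbs_ne_zero.mpr (Finset.ne_of_mem_erase hnu)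
    exact Finset.mem_Ico.mpr ⟨Nat.pow_log_le_self 2 hn₀, Nat.lt_pow_succ_log_self one_lt_two _⟩
  have hgeom : ∑ m ∈ Finset.range M, r ^ m ≤ (1 - r)⁻¹ := by
    rw [← tsum_geometric_of_lt_one hr₀ hr₁]
    exact (summable_geometric_of_lt_one hr₀ hr₁).sum_le_tsum _ fun m _ ↦ pow_nonneg hr₀ m
  calc ∑ n ∈ u, a n ≤ a 0 + ∑ n ∈ u.erase 0, a n := by
        by_cases h₀ : 0 ∈ u
        · rw [Finset.add_sum_erase u a h₀]
        · rw [Finset.erase_eq_of_notMem h₀]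
          exact le_add_of_nonneg_left (ha 0)
    _ = a 0 + ∑ m ∈ Finset.range M, ∑ n ∈ u.erase 0 with Nat.log 2 n.natAbs = m, a n := by
        rw [Finset.sum_fiberwise_of_maps_to hmaps]
    _ ≤ a 0 + C * (1 - r)⁻¹ := by
        grw [Finset.sum_le_sum fun m _ ↦ hblock m, ← Finset.mul_sum, hgeom]

lemma card_le_of_natAbs_mem_Ico {s : Finset ℤ} {a b : ℕ}
    (hs : ∀ n ∈ s, n.natAbs ∈ Finset.Ico a b) : s.card ≤ 2 * (b - a) := by
  have hsub : s ⊆ Finset.Ioc (-(b : ℤ)) (-a) ∪ Finset.Ico (a : ℤ) b := fun n hn ↦ by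
    have := hs n hn
    simp only [Finset.mem_Ico, Finset.mem_union, Finset.mem_Ioc] at *
    omega
  calc s.card ≤ _ := Finset.card_le_card hsub
    _ ≤ _ := Finset.card_union_le _ _
    _ = 2 * (b - a) := by simp only [Int.card_Ioc, Int.card_Ico]; omega

lemma continuous_of_norm_sub_le_mul_rpow {F : Type*} [SeminormedAddCommGroup F] {f : ℝ → F}
    {K α : ℝ} (hα : 0 < α) (hf : ∀ x h, ‖f (x + h) - f x‖ ≤ K * |h| ^ α) : Continuous f := by
  refine continuous_iff_continuousAt.mpr fun x ↦ tendsto_iff_norm_sub_tendsto_zero.mpr ?_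
  have hbound : Tendsto (fun y ↦ K * |y - x| ^ α) (𝓝 x) (𝓝 0) := by
    have : Continuous fun y ↦ K * |y - x| ^ α := by fun_prop (disch := exact hα.le)
    simpa [zero_rpow hα.ne'] using this.tendsto x
  exact squeeze_zero (fun _ ↦ norm_nonneg _) (fun y ↦ by simpa using hf x (y - x)) hbound

namespace AddCircle

open MeasureTheory

variable {T : ℝ}

lemma fourier_apply_add (n : ℤ) (t a : AddCircle T) :
    fourier n (t + a) = fourier n t * fourier n a := by
  simp only [fourier_apply, smul_add, toCircle_add, Circle.coe_mul]

variable [Fact (0 < T)]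

section Coefficients

variable {E : Type*} [NormedAddCommGroup E] [NormedSpace ℂ E]

lemma fourierCoeff_comp_add_right (g : AddCircle T → E) (a : AddCircle T) (n : ℤ) :
    fourierCoeff (fun t ↦ g (t + a)) n = fourier n a • fourierCoeff g n := by
  rw [fourierCoeff, fourierCoeff, ← integral_smul,
    ← integral_add_right_eq_self (fun t ↦ fourier n a • fourier (-n) t • g t) a]
  congr 1 with t
  rw [smul_smul, fourier_apply_add, mul_left_comm, ← fourier_add, add_neg_cancel, fourier_zero,
    mul_one]

lemma fourierCoeff_sub {f g : AddCircle T → E} (hf : Integrable f haarAddCircle)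
    (hg : Integrable g haarAddCircle) (n : ℤ) :
    fourierCoeff (f - g) n = fourierCoeff f n - fourierCoeff g n := by
  simp only [fourierCoeff, Pi.sub_apply, smul_sub]
  exact integral_sub (hf.fourier_smul _) (hg.fourier_smul _)

end Coefficients

lemma sum_sq_norm_fourierCoeff_le {g : AddCircle T → ℂ} (hg : Continuous g) {C : ℝ}
    (hC : ∀ t, ‖g t‖ ≤ C) (s : Finset ℤ) :
    ∑ n ∈ s, ‖fourierCoeff g n‖ ^ 2 ≤ C ^ 2 := by
  set gL := ContinuousMap.toLp (E := ℂ) 2 haarAddCircle ℂ ⟨g, hg⟩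
  have parseval := hasSum_sq_fourierCoeff gL
  rw [funext (fourierCoeff_toLp ⟨g, hg⟩)] at parseval
  refine (sum_le_hasSum s (fun n _ ↦ by positivity) parseval).trans ?_
  calc ∫ t, ‖gL t‖ ^ 2 ∂haarAddCircle ≤ ∫ _, C ^ 2 ∂haarAddCircle := by
        refine integral_mono_of_nonneg (.of_forall fun _ ↦ by positivity) (integrable_const _) ?_
        filter_upwards [ContinuousMap.coeFn_toLp (p := 2) (𝕜 := ℂ) haarAddCircle ⟨g, hg⟩]
          with t ht
        rw [ht]
        exact pow_le_pow_left₀ (norm_nonneg _) (hC t) 2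
    _ = C ^ 2 := by simp

lemma sum_sq_norm_fourier_sub_one_mul_fourierCoeff_le {g : AddCircle T → ℂ} (hg : Continuous g)
    (a : AddCircle T) {B : ℝ} (hB : ∀ t, ‖g (t + a) - g t‖ ≤ B) (s : Finset ℤ) :
    ∑ n ∈ s, ‖(fourier n a - 1) * fourierCoeff g n‖ ^ 2 ≤ B ^ 2 := by
  have hga : Continuous fun t ↦ g (t + a) := hg.comp (continuous_add_const a)
  have hint {φ : AddCircle T → ℂ} (hφ : Continuous φ) : Integrable φ haarAddCircle :=
    hφ.integrable_of_hasCompactSupport (.of_compactSpace _)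
  convert sum_sq_norm_fourierCoeff_le (hga.sub hg) hB s using 3 with n
  rw [fourierCoeff_sub (hint hga) (hint hg), fourierCoeff_comp_add_right, smul_eq_mul, sub_mul,
    one_mul]

lemma two_le_norm_fourier_sub_one_sq {m : ℕ} {n : ℤ}
    (hn : n.natAbs ∈ Finset.Ico (2 ^ m) (2 ^ (m + 1))) :
    2 ≤ ‖fourier n ((T / 2 ^ (m + 2) : ℝ) : AddCircle T) - 1‖ ^ 2 := by
  have hT : (T : ℂ) ≠ 0 := Complex.ofReal_ne_zero.mpr (Fact.out : 0 < T).ne'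
  have hnorm : ‖(fourier n ((T / 2 ^ (m + 2) : ℝ) : AddCircle T) : ℂ)‖ = 1 := by
    rw [fourier_apply, Circle.norm_coe]
  have hre : (fourier n ((T / 2 ^ (m + 2) : ℝ) : AddCircle T) : ℂ).re
      = Real.cos (π * |(n : ℝ)| / 2 ^ (m + 1)) := by
    rw [fourier_coe_apply, show 2 * π * Complex.I * n * ((T / 2 ^ (m + 2) : ℝ) : ℂ) / T
        = ((π * n / 2 ^ (m + 1) : ℝ) : ℂ) * Complex.I by push_cast; field_simp; ring,
      Complex.exp_ofReal_mul_I_re, ← Real.cos_abs, abs_div, abs_mul, abs_of_pos pi_pos,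
      abs_of_pos (by positivity : (0 : ℝ) < 2 ^ (m + 1))]
  have habs : (2 : ℝ) ^ m ≤ |(n : ℝ)| ∧ |(n : ℝ)| ≤ 2 ^ (m + 1) := by
    rw [Finset.mem_Ico] at hn
    rw [← Int.cast_abs, Int.abs_eq_natAbs, Int.cast_natCast]
    exact ⟨by exact_mod_cast hn.1, by exact_mod_cast hn.2.le⟩
  have hcos : Real.cos (π * |(n : ℝ)| / 2 ^ (m + 1)) ≤ 0 := by
    apply Real.cos_nonpos_of_pi_div_two_le_of_le
    · rw [le_div_iff₀ (by positivity), pow_succ]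
      nlinarith [pi_pos]
    · rw [div_le_iff₀ (by positivity)]
      nlinarith [pi_pos, pow_pos (two_pos : (0 : ℝ) < 2) (m + 1)]
  rw [Complex.norm_sub_one_sq_eq_of_norm_eq_one hnorm, hre]
  linarith

lemma sum_norm_fourierCoeff_dyadic_le {g : AddCircle T → ℂ} (hg : Continuous g) {α K : ℝ}
    (hK₀ : 0 ≤ K) (hK : ∀ t (x : ℝ), ‖g (t + x) - g t‖ ≤ K * |x| ^ α) (m : ℕ) (s : Finset ℤ)
    (hs : ∀ n ∈ s, n.natAbs ∈ Finset.Ico (2 ^ m) (2 ^ (m + 1))) :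
    ∑ n ∈ s, ‖fourierCoeff g n‖ ≤ K * (T / 4) ^ α * (√2 / 2 ^ α) ^ m := by
  set h : ℝ := T / 2 ^ (m + 2)
  have hT : 0 < T := Fact.out
  have hh : |h| ^ α = (T / 4) ^ α * (2 ^ α)⁻¹ ^ m := by
    rw [abs_of_pos (by positivity), show h = T / 4 / 2 ^ m by simp only [h]; ring,
      div_rpow (by positivity) (by positivity), ← rpow_pow_comm zero_le_two, div_eq_mul_inv,
      inv_pow]
  have hbessel : 2 * ∑ n ∈ s, ‖fourierCoeff g n‖ ^ 2 ≤ (K * |h| ^ α) ^ 2 :=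
    calc 2 * ∑ n ∈ s, ‖fourierCoeff g n‖ ^ 2
        ≤ ∑ n ∈ s, ‖(fourier n (h : AddCircle T) - 1) * fourierCoeff g n‖ ^ 2 := by
          rw [Finset.mul_sum]
          refine Finset.sum_le_sum fun n hn ↦ ?_
          rw [norm_mul, mul_pow]
          gcongr
          exact two_le_norm_fourier_sub_one_sq (hs n hn)
      _ ≤ (K * |h| ^ α) ^ 2 := sum_sq_norm_fourier_sub_one_mul_fourierCoeff_le hg _ (hK · h) s
  have hcard : (s.card : ℝ) ≤ 2 * 2 ^ m := by
    have := card_le_of_natAbs_mem_Ico hs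
    rw [pow_succ] at this
    exact_mod_cast this.trans (by omega)
  have hsq : (∑ n ∈ s, ‖fourierCoeff g n‖) ^ 2 ≤ (K * (T / 4) ^ α * (√2 / 2 ^ α) ^ m) ^ 2 :=
    calc (∑ n ∈ s, ‖fourierCoeff g n‖) ^ 2 ≤ s.card * ∑ n ∈ s, ‖fourierCoeff g n‖ ^ 2 :=
          sq_sum_le_card_mul_sum_sq
      _ ≤ 2 ^ m * (K * |h| ^ α) ^ 2 := by
          nlinarith [Finset.sum_nonneg fun n (_ : n ∈ s) ↦ sq_nonneg ‖fourierCoeff g n‖]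
      _ = _ := by
          rw [hh, show (2 : ℝ) ^ m = (√2 ^ m) ^ 2 by
            rw [← pow_mul, mul_comm, pow_mul, sq_sqrt zero_le_two]]
          ring
  exact (pow_le_pow_iff_left₀ (Finset.sum_nonneg fun n _ ↦ norm_nonneg _) (by positivity)
    two_ne_zero).mp hsq

theorem summable_norm_fourierCoeff_of_holder {g : AddCircle T → ℂ} (hg : Continuous g)
    {α K : ℝ} (hα : 1 / 2 < α) (hK : ∀ t (x : ℝ), ‖g (t + x) - g t‖ ≤ K * |x| ^ α) :
    Summable fun n ↦ ‖fourierCoeff g n‖ := by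
  have hK₀ : 0 ≤ K := by simpa using (norm_nonneg _).trans (hK 0 1)
  have hr : √2 / 2 ^ α < 1 := by
    rw [div_lt_one (by positivity), sqrt_eq_rpow]
    exact rpow_lt_rpow_of_exponent_lt one_lt_two hα
  exact summable_of_dyadic_sum_le_geometric (fun n ↦ norm_nonneg _) (by positivity) hr
    (sum_norm_fourierCoeff_dyadic_le hg hK₀ hK)

lemma fourierCoeff_lift_eq_intervalIntegral [Fact (0 < 2 * π)] {f : ℝ → ℂ}
    (hf : Function.Periodic f (2 * π)) (n : ℤ) :
    fourierCoeff hf.lift n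
      = 1 / (2 * π) * ∫ θ in (0 : ℝ)..2 * π, f θ * Complex.exp (-n * θ * Complex.I) := by
  rw [fourierCoeff_eq_intervalIntegral _ n 0, zero_add, Complex.real_smul]
  push_cast
  congr 1
  refine intervalIntegral.integral_congr fun θ _ ↦ ?_
  rw [smul_eq_mul, fourier_coe_apply, hf.lift_coe, mul_comm]
  congr 2
  field_simp
  push_cast
  ring

end AddCircle

/-- Bernstein's theorem: if a `2π`-periodic function `f : ℝ → ℂ` satisfies a
Hölder condition of order `α > 1/2`, then its Fourier series converges
absolutely. -/
theorem bernstein_absolute_convergence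
    (f : ℝ → ℂ) (hper : ∀ x : ℝ, f (x + 2 * π) = f x)
    (α : ℝ) (hα : 1 / 2 < α) (K : ℝ)
    (hf : ∀ x h : ℝ, ‖f (x + h) - f x‖ ≤ K * |h| ^ α) :
    Summable (fun n : ℤ =>
      ‖(1 / (2 * (π : ℂ))) *
        ∫ θ in (0:ℝ)..(2 * π), f θ * Complex.exp (-(n : ℂ) * (θ : ℂ) * Complex.I)‖) := by
  have hp : Function.Periodic f (2 * π) := hper
  have : Fact (0 < 2 * π) := ⟨two_pi_pos⟩
  have hcont : Continuous hp.lift :=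
    (continuous_of_norm_sub_le_mul_rpow (by linarith) hf).quotient_liftOn' _
  have hholder (t : AddCircle (2 * π)) (x : ℝ) :
      ‖hp.lift (t + x) - hp.lift t‖ ≤ K * |x| ^ α := by
    induction t using QuotientAddGroup.induction_on with
    | H y => rw [← AddCircle.coe_add, hp.lift_coe, hp.lift_coe]; exact hf y x
  simpa only [AddCircle.fourierCoeff_lift_eq_intervalIntegral] using
    AddCircle.summable_norm_fourierCoeff_of_holder hcont hα hholder
end

section
/- (Smith) Let β > 1 and let φ : ℝ → ℂ be a continuous integrable function whose Fourier transform φ̂(y) = ∫_{−∞}^∞ e^{−2πixy} φ(x) dx satisfies: |y|^β |φ̂(y)| is bounded on ℝ. Suppose moreover that for each fixed h > 0 the series ∑_{k=−∞}^∞ h φ(hk + hα) converges uniformly in α on every finite interval. Then for every fixed real α, ∑_{k=−∞}^∞ h φ(hk + hα) = φ̂(0) + O(h^β) as h → 0+. -/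
open Real Filter Topology MeasureTheory
open scoped FourierTransform

/-!
For fixed `h`, the sum `∑ₖ h φ(hk + hα)` is the value at `α` of the `1`-periodisation of
`g x = h φ(hx)`, which locally uniform convergence makes continuous. Its Fourier coefficients
are `ĝ m = φ̂(m / h)`, so the decay of `φ̂` bounds them by `M h^β |m|^(-β)` for `m ≠ 0`; they are
therefore summable and the Fourier series converges to the periodisation (Poisson summation).
Removing the term `m = 0`, which is `φ̂ 0`, leaves at most `M h^β ∑ |m|^(-β)`.
-/

theorem integral_exp_mul_eq_fourier (f : ℝ → ℂ) (y : ℝ) :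
    ∫ x : ℝ, Complex.exp (-2 * (π : ℂ) * Complex.I * (x : ℂ) * (y : ℂ)) * f x = 𝓕 f y := by
  rw [fourier_real_eq_integral_exp_smul]
  congr 1 with x
  rw [smul_eq_mul]
  push_cast
  ring_nf

theorem fourier_abs_smul_comp_mul_left {E : Type*} [NormedAddCommGroup E] [NormedSpace ℂ E]
    (f : ℝ → E) {c : ℝ} (hc : c ≠ 0) (w : ℝ) :
    𝓕 (fun x => |c| • f (c * x)) w = 𝓕 f (w / c) := by
  have hscale : ∀ x : ℝ, 𝐞 (-(x * w)) • |c| • f (c * x)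
      = |c| • (fun y => 𝐞 (-(y * (w / c))) • f y) (c * x) := by
    intro x
    rw [smul_comm]
    congr 3
    field_simp
  rw [fourier_real_eq, fourier_real_eq, integral_congr_ae (.of_forall hscale), integral_smul,
    Measure.integral_comp_mul_left (fun y => 𝐞 (-(y * (w / c))) • f y), abs_inv, smul_smul,
    mul_inv_cancel₀ (abs_ne_zero.mpr hc), one_smul]

theorem norm_apply_div_le_of_rpow_mul_norm_le {E : Type*} [Norm E] {f : ℝ → E} {β M h y : ℝ}
    (hM : ∀ y, |y| ^ β * ‖f y‖ ≤ M) (hh : 0 < h) (hy : y ≠ 0) :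
    ‖f (y / h)‖ ≤ M * h ^ β * |y| ^ (-β) := by
  have hpos : 0 < |y / h| ^ β := by positivity
  calc ‖f (y / h)‖ ≤ M * (|y / h| ^ β)⁻¹ := by
        rw [le_mul_inv_iff₀ hpos, mul_comm]
        exact hM _
    _ = M * h ^ β * |y| ^ (-β) := by
        rw [abs_div, abs_of_pos hh, Real.div_rpow (abs_nonneg _) hh.le,
          Real.rpow_neg (abs_nonneg _)]
        field_simp

theorem periodic_tsum_comp_add_int {E : Type*} [AddCommMonoid E] [TopologicalSpace E]
    (g : ℝ → E) : Function.Periodic (fun x => ∑' n : ℤ, g (x + n)) 1 := by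
  intro x
  simpa [add_assoc, add_comm, add_left_comm] using
    (Equiv.addRight (1 : ℤ)).tsum_eq (fun n : ℤ => g (x + n))

theorem tendstoLocallyUniformly_of_forall_Icc {ι E : Type*} [UniformSpace E] {F : ι → ℝ → E}
    {f : ℝ → E} {l : Filter ι} (h : ∀ R, TendstoUniformlyOn F f l (Set.Icc (-R) R)) :
    TendstoLocallyUniformly F f l := by
  refine tendstoLocallyUniformly_iff_forall_isCompact.mpr fun K hK => ?_
  obtain ⟨R, hR⟩ := hK.isBounded.subset_closedBall 0
  rw [Real.closedBall_eq_Icc, zero_sub, zero_add] at hR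
  exact (h R).mono hR

theorem hasSum_intervalIntegral_of_tendstoLocallyUniformly {ι E : Type*} [Countable ι]
    [NormedAddCommGroup E] [NormedSpace ℝ E] {f : ι → ℝ → E} {F : ℝ → E}
    (hf : ∀ i, Continuous (f i))
    (hF : TendstoLocallyUniformly (fun s x => ∑ i ∈ s, f i x) F atTop) (a b : ℝ) :
    HasSum (fun i => ∫ x in a..b, f i x) (∫ x in a..b, F x) := by
  have hsum : ∀ s : Finset ι, ∑ i ∈ s, ∫ x in a..b, f i x = ∫ x in a..b, ∑ i ∈ s, f i x :=
    fun s => (intervalIntegral.integral_finsetSum fun i _ => (hf i).intervalIntegrable a b).symm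
  simp_rw [HasSum, hsum]
  exact (tendstoLocallyUniformly_iff_forall_isCompact.mp hF _ isCompact_uIcc)
    |>.tendsto_intervalIntegral_of_continuousOn
      (.of_forall fun s => (continuous_finsetSum s fun i _ => hf i).continuousOn)

section Periodization

variable {g : ℝ → ℂ} (hg : Continuous g)
  (hconv : TendstoLocallyUniformly (fun (s : Finset ℤ) x => ∑ n ∈ s, g (x + n))
    (fun x => ∑' n : ℤ, g (x + n)) atTop)
include hg hconv

theorem continuous_tsum_comp_add_int : Continuous fun x => ∑' n : ℤ, g (x + n) :=
  hconv.continuous <| .of_forall fun s =>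
    continuous_finsetSum s fun _ _ => hg.comp (continuous_add_const _)

/-- Unlike `Real.fourierCoeff_tsum_comp_add`, this needs only locally uniform convergence of the
periodisation, not summability of the sup norms of the translates on compacts. -/
theorem fourierCoeff_lift_tsum_comp_add_int (hgi : Integrable g) (m : ℤ) :
    fourierCoeff (periodic_tsum_comp_add_int g).lift m = 𝓕 g m := by
  set e : ℝ → ℂ := fun x => fourier (-m) (x : UnitAddCircle)
  have he : Continuous e := (map_continuous (fourier (-m))).comp continuous_quotient_mk'
  have he_periodic : ∀ (n : ℤ) (x : ℝ), e (x + n) = e x := by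
    have hp : Function.Periodic e 1 := fun x =>
      congrArg (fourier (-m)) (AddCircle.coe_add_period 1 x)
    exact fun n x => by simpa only [mul_one] using hp.int_mul n x
  have hconv_e : TendstoLocallyUniformly (fun (s : Finset ℤ) x => ∑ n ∈ s, e x * g (x + n))
      (fun x => e x * ∑' n : ℤ, g (x + n)) atTop := by
    simp_rw [← Finset.mul_sum]
    exact (TendstoUniformly.tendstoLocallyUniformly fun u hu =>
      .of_forall fun _ _ => refl_mem_uniformity hu).fun_mul₀ hconv he
      (continuous_tsum_comp_add_int hg hconv)
  have hinterchange : HasSum (fun n : ℤ => ∫ x in (0 : ℝ)..1, e x * g (x + n))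
      (∫ x in (0 : ℝ)..1, e x * ∑' n : ℤ, g (x + n)) :=
    hasSum_intervalIntegral_of_tendstoLocallyUniformly
      (fun _ => he.mul (hg.comp (continuous_add_const _))) hconv_e 0 1
  have hunfold : HasSum (fun n : ℤ => ∫ x in (0 : ℝ)..1, e (x + n) * g (x + n))
      (∫ x, e x * g x) :=
    (hgi.bdd_mul he.aestronglyMeasurable (.of_forall fun x =>
      (Circle.norm_coe _).le)).hasSum_intervalIntegral_comp_add_int
  calc fourierCoeff (periodic_tsum_comp_add_int g).lift m
      = ∫ x in (0 : ℝ)..1, e x * ∑' n : ℤ, g (x + n) := by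
        simp [fourierCoeff_eq_intervalIntegral _ m 0, e]
    _ = ∫ x, e x * g x := hinterchange.unique (by simpa only [he_periodic] using hunfold)
    _ = 𝓕 g m := by
        rw [fourier_real_eq_integral_exp_smul]
        congr 1 with x
        simp only [e, smul_eq_mul, fourier_coe_apply]
        push_cast
        ring_nf

theorem hasSum_fourier_tsum_comp_add_int (hgi : Integrable g)
    (hsum : Summable fun n : ℤ => 𝓕 g n) (x : ℝ) :
    HasSum (fun n : ℤ => 𝓕 g n * fourier n (x : UnitAddCircle)) (∑' n : ℤ, g (x + n)) := by
  let F : C(UnitAddCircle, ℂ) := ⟨(periodic_tsum_comp_add_int g).lift,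
    continuous_coinduced_dom.mpr (continuous_tsum_comp_add_int hg hconv)⟩
  have hcoeff : fourierCoeff F = fun n : ℤ => 𝓕 g n :=
    funext (fourierCoeff_lift_tsum_comp_add_int hg hconv hgi)
  have hF := has_pointwise_sum_fourier_series_of_summable (f := F) (hcoeff ▸ hsum) x
  simp only [hcoeff, smul_eq_mul] at hF
  exact hF

theorem norm_tsum_comp_add_int_sub_fourier_zero_le (hgi : Integrable g) {β B : ℝ} (hβ : 1 < β)
    (hdecay : ∀ n : ℤ, n ≠ 0 → ‖𝓕 g n‖ ≤ B * |(n : ℝ)| ^ (-β)) (x : ℝ) :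
    ‖∑' n : ℤ, g (x + n) - 𝓕 g 0‖ ≤ B * ∑' n : ℤ, |(n : ℝ)| ^ (-β) := by
  have hsummable := summable_abs_int_rpow hβ
  have hsum : Summable fun n : ℤ => 𝓕 g n :=
    .of_norm_bounded_eventually (hsummable.mul_left B) ((eventually_cofinite_ne 0).mono hdecay)
  have hpoisson := (hasSum_fourier_tsum_comp_add_int hg hconv hgi hsum x).update 0 0
  refine le_of_eq_of_le ?_ (hpoisson.norm_le_of_bounded (hsummable.hasSum.mul_left B) fun n => ?_)
  · simp [sub_eq_neg_add]
  rcases eq_or_ne n 0 with rfl | hn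
  · simp [Real.zero_rpow (by linarith : -β ≠ 0)]
  · rw [Function.update_of_ne hn, norm_mul, fourier_apply, Circle.norm_coe, mul_one]
    exact hdecay n hn

end Periodization

/-- Smith's lemma: if `φ : ℝ → ℂ` is continuous and integrable, its Fourier
transform `φ̂(y) = ∫ e^{-2πixy} φ(x) dx` satisfies `|y|^β |φ̂(y)| = O(1)` for
some `β > 1`, and for each `h > 0` the series `∑_k h φ(hk + hα)` converges
uniformly in `α` on every finite interval, then for each fixed `α`,
`∑_k h φ(hk + hα) = φ̂(0) + O(h^β)` as `h → 0+`. -/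
theorem smith_poisson_summation_estimate
    (β : ℝ) (hβ : 1 < β) (φ : ℝ → ℂ)
    (hcont : Continuous φ) (hint : Integrable φ)
    (hFT : ∃ M : ℝ, ∀ y : ℝ,
      |y| ^ β * ‖∫ x : ℝ, Complex.exp (-2 * (π : ℂ) * Complex.I * (x : ℂ) * (y : ℂ)) * φ x‖ ≤ M)
    (hunif : ∀ h : ℝ, 0 < h → ∀ R : ℝ, TendstoUniformlyOn
      (fun (s : Finset ℤ) (α : ℝ) => ∑ k ∈ s, (h : ℂ) * φ (h * (k : ℝ) + h * α))
      (fun α : ℝ => ∑' k : ℤ, (h : ℂ) * φ (h * (k : ℝ) + h * α))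
      atTop (Set.Icc (-R) R))
    (α : ℝ) :
    ∃ C > (0:ℝ), ∃ δ > (0:ℝ), ∀ h : ℝ, 0 < h → h < δ →
      ‖(∑' k : ℤ, (h : ℂ) * φ (h * (k : ℝ) + h * α)) -
        ∫ x : ℝ, Complex.exp (-2 * (π : ℂ) * Complex.I * (x : ℂ) * (0 : ℂ)) * φ x‖
        ≤ C * h ^ β := by
  obtain ⟨M, hM⟩ := hFT
  simp only [integral_exp_mul_eq_fourier] at hM
  have hφ0 := integral_exp_mul_eq_fourier φ 0
  rw [Complex.ofReal_zero] at hφ0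
  set K := ∑' n : ℤ, |(n : ℝ)| ^ (-β)
  have hM0 : 0 ≤ M := le_trans (by positivity) (hM 1)
  have hK0 : 0 ≤ K := tsum_nonneg fun n => by positivity
  refine ⟨M * K + 1, by positivity, 1, one_pos, fun h hh _ => ?_⟩
  set g : ℝ → ℂ := fun x => |h| • φ (h * x)
  have hg_translate : ∀ (x : ℝ) (n : ℤ), (h : ℂ) * φ (h * n + h * x) = g (x + n) := by
    simp [g, abs_of_pos hh, mul_add, add_comm]
  have hconv := tendstoLocallyUniformly_of_forall_Icc (hunif h hh)
  simp only [hg_translate] at hconv ⊢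
  have hdecay : ∀ n : ℤ, n ≠ 0 → ‖𝓕 g n‖ ≤ M * h ^ β * |(n : ℝ)| ^ (-β) := fun n hn => by
    rw [fourier_abs_smul_comp_mul_left φ hh.ne']
    exact norm_apply_div_le_of_rpow_mul_norm_le hM hh (Int.cast_ne_zero.mpr hn)
  have hg : Continuous g := by fun_prop
  have hgi : Integrable g := (hint.comp_mul_left' hh.ne').smul |h|
  have hg0 : 𝓕 g 0 = 𝓕 φ 0 := by
    rw [fourier_abs_smul_comp_mul_left φ hh.ne', zero_div]
  rw [hφ0, ← hg0]
  calc _ ≤ M * h ^ β * K := norm_tsum_comp_add_int_sub_fourier_zero_le hg hconv hgi hβ hdecay α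
    _ ≤ (M * K + 1) * h ^ β := by nlinarith [Real.rpow_nonneg hh.le β]
end
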